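/- arXiv:2110.06356 — 10 statements merged into one kernel-verified Lean document; each statement's English description precedes it below -/
import Mathlib

section
/- Let a, b, c be pairwise distinct complex numbers with |a| = |b| = |c| = 1, and let F be a complex number with |F| = 1. Then the three points (F + a + b - ab·conj(F))/2, (F + b + c - bc·conj(F))/2, (F + c + a - ca·conj(F))/2 are collinear (over ℝ). (These are the feet of the perpendiculars from F to the three sidelines, so this is the Simson line of F for the triangle a, b, c inscribed in the unit circle.) -/
open Complex ComplexConjugate

/-- Simson line: for a triangle `a b c` inscribed in the unit circle and a point
`F` on the unit circle, the feet of the perpendiculars from `F` to the three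
sidelines, namely `(F + u + v - uv·conj F)/2` for each side `uv`, are collinear. -/
theorem simson_feet_collinear (a b c F : ℂ)
    (hab : a ≠ b) (hbc : b ≠ c) (hac : a ≠ c)
    (ha : ‖a‖ = 1) (hb : ‖b‖ = 1) (hc : ‖c‖ = 1)
    (hF : ‖F‖ = 1) :
    Collinear ℝ ({(F + a + b - a * b * conj F) / 2,
                  (F + b + c - b * c * conj F) / 2,
                  (F + c + a - c * a * conj F) / 2} : Set ℂ) := by
  have ha0 : a ≠ 0 := by intro h; simp [h] at ha
  have hb0 : b ≠ 0 := by intro h; simp [h] at hb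
  have hc0 : c ≠ 0 := by intro h; simp [h] at hc
  have hF0 : F ≠ 0 := by intro h; simp [h] at hF
  have hca : conj a = a⁻¹ := eq_inv_of_mul_eq_one_left (by
    rw [mul_comm, Complex.mul_conj]; norm_cast; simp [Complex.normSq_eq_norm_sq, ha])
  have hcb : conj b = b⁻¹ := eq_inv_of_mul_eq_one_left (by
    rw [mul_comm, Complex.mul_conj]; norm_cast; simp [Complex.normSq_eq_norm_sq, hb])
  have hcc : conj c = c⁻¹ := eq_inv_of_mul_eq_one_left (by
    rw [mul_comm, Complex.mul_conj]; norm_cast; simp [Complex.normSq_eq_norm_sq, hc])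
  have hcF : conj F = F⁻¹ := eq_inv_of_mul_eq_one_left (by
    rw [mul_comm, Complex.mul_conj]; norm_cast; simp [Complex.normSq_eq_norm_sq, hF])
  set p := (F + a + b - a * b * conj F) / 2 with hp
  set q := (F + b + c - b * c * conj F) / 2 with hq
  set r := (F + c + a - c * a * conj F) / 2 with hr
  by_cases hFb : F = b
  · -- then p = q
    have hpq : p = q := by
      rw [hp, hq, hcF, hFb]
      field_simp
      ring
    rw [hpq]
    have : ({q, q, r} : Set ℂ) = {q, r} := by
      simp [Set.insert_comm]
    rw [this]
    exact collinear_pair ℝ q r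
  by_cases hFc : F = c
  · -- then r = q
    have hrq : r = q := by
      rw [hr, hq, hcF, hFc]
      field_simp
      ring
    rw [hrq]
    have : ({p, q, q} : Set ℂ) = {p, q} := by simp
    rw [this]
    exact collinear_pair ℝ p q
  -- main case
  have hFb' : F - b ≠ 0 := sub_ne_zero.mpr hFb
  have hFc' : F - c ≠ 0 := sub_ne_zero.mpr hFc
  have hab' : a - b ≠ 0 := sub_ne_zero.mpr hab
  set t : ℂ := (a - c) * (F - b) / ((a - b) * (F - c)) with htdef
  have hinvab : a⁻¹ - b⁻¹ ≠ 0 := by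
    rw [inv_sub_inv ha0 hb0]
    exact div_ne_zero (sub_ne_zero.mpr (fun h => hab h.symm)) (mul_ne_zero ha0 hb0)
  have hinvFc : F⁻¹ - c⁻¹ ≠ 0 := by
    rw [inv_sub_inv hF0 hc0]
    exact div_ne_zero (sub_ne_zero.mpr (fun h => hFc h.symm)) (mul_ne_zero hF0 hc0)
  have htreal : conj t = t := by
    rw [htdef]
    simp only [map_div₀, map_mul, map_sub, hca, hcb, hcc, hcF]
    rw [inv_sub_inv ha0 hc0, inv_sub_inv hF0 hb0, inv_sub_inv ha0 hb0, inv_sub_inv hF0 hc0]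
    rw [div_eq_div_iff (by field_simp; simp [sub_eq_zero, ha0, hb0, hc0, hF0, Ne.symm hab, Ne.symm hFc, hab, hFc]) (mul_ne_zero hab' hFc')]
    field_simp
    ring
  have htre : (t.re : ℂ) = t := by
    exact Complex.conj_eq_iff_re.mp htreal
  rw [collinear_iff_of_mem (Set.mem_insert_of_mem _ (Set.mem_insert _ _))]
  refine ⟨r - q, fun x hx => ?_⟩
  simp only [Set.mem_insert_iff, Set.mem_singleton_iff] at hx
  rcases hx with h | h | h
  · refine ⟨t.re, ?_⟩
    rw [h]
    have key : p - q = t * (r - q) := by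
      rw [hp, hq, hr, htdef, hcF]
      field_simp
      ring
    have : p = t * (r - q) + q := by rw [← key]; ring
    rw [this]
    simp [vadd_eq_add, Complex.real_smul, htre]
  · exact ⟨0, by simp [h]⟩
  · exact ⟨1, by simp [h]⟩
end

section
/- Let a, b, c be pairwise distinct complex numbers with |a| = |b| = |c| = 1, and let F be a complex number with |F| = 1. The reflections of F across the three sidelines, namely a + b - ab·conj(F), b + c - bc·conj(F), c + a - ca·conj(F), are collinear, and the real-affine line containing them passes through the orthocenter a + b + c of the triangle. (This line is the directrix of the parabola inscribed in the triangle with focus F.) -/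
open Complex ComplexConjugate

private lemma real_smul_of_conj_eq {k v z : ℂ} (hv : v ≠ 0)
    (hkv : conj v = k * v) (hz : conj z = k * z) : ∃ r : ℝ, z = r • v := by
  have hk : k ≠ 0 := by
    intro h
    rw [h, zero_mul] at hkv
    apply hv
    have := congrArg conj hkv
    simpa using this
  have hreal : conj (z / v) = z / v := by
    rw [map_div₀, hkv, hz, mul_div_mul_left _ _ hk]
  refine ⟨(z / v).re, ?_⟩
  have h2 : ((z / v).re : ℂ) = z / v := Complex.conj_eq_iff_re.mp hreal
  rw [Complex.real_smul, h2, div_mul_cancel₀ _ hv]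

private lemma collinear_aux (p1 p2 p3 H k : ℂ)
    (h1 : conj (p1 - p2) = k * (p1 - p2))
    (h3 : conj (p3 - p2) = k * (p3 - p2))
    (hH : conj (H - p2) = k * (H - p2))
    (hne : p1 - p2 ≠ 0 ∨ p3 - p2 ≠ 0) :
    Collinear ℝ ({p1, p2, p3} : Set ℂ) ∧ H ∈ affineSpan ℝ ({p1, p2, p3} : Set ℂ) := by
  have hp2 : p2 ∈ ({p1, p2, p3} : Set ℂ) := by simp
  obtain ⟨q, hq, hv0, hkv⟩ : ∃ q ∈ ({p1, p2, p3} : Set ℂ),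
      q - p2 ≠ 0 ∧ conj (q - p2) = k * (q - p2) := by
    rcases hne with h | h
    · exact ⟨p1, by simp, h, h1⟩
    · exact ⟨p3, by simp, h, h3⟩
  have key : ∀ z : ℂ, conj (z - p2) = k * (z - p2) → ∃ r : ℝ, z = r • (q - p2) + p2 := by
    intro z hz
    obtain ⟨r, hr⟩ := real_smul_of_conj_eq hv0 hkv hz
    exact ⟨r, by rw [← hr]; ring⟩
  constructor
  · rw [collinear_iff_of_mem hp2]
    refine ⟨q - p2, ?_⟩
    intro p hp
    have hp' : conj (p - p2) = k * (p - p2) := by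
      rcases hp with h | h | h
      · subst h; exact h1
      · subst h; simp
      · simp only [Set.mem_singleton_iff] at h; subst h; exact h3
    obtain ⟨r, hr⟩ := key p hp'
    exact ⟨r, by simpa using hr⟩
  · obtain ⟨r, hr⟩ := key H hH
    have := AffineSubspace.smul_vsub_vadd_mem (affineSpan ℝ ({p1, p2, p3} : Set ℂ)) r
      (subset_affineSpan ℝ _ hq) (subset_affineSpan ℝ _ hp2) (subset_affineSpan ℝ _ hp2)
    rw [hr]
    simpa [vsub_eq_sub, vadd_eq_add] using this

/-- For a triangle `a b c` inscribed in the unit circle and a point `F` on the unit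
circle, the reflections of `F` across the three sidelines, `u + v - uv·conj F` for
each side `uv`, are collinear, and their line (the directrix of the inscribed
parabola with focus `F`) passes through the orthocenter `a + b + c`. -/
theorem directrix_through_orthocenter (a b c F : ℂ)
    (hab : a ≠ b) (hbc : b ≠ c) (hac : a ≠ c)
    (ha : ‖a‖ = 1) (hb : ‖b‖ = 1) (hc : ‖c‖ = 1)
    (hF : ‖F‖ = 1) :
    Collinear ℝ ({a + b - a * b * conj F,
                  b + c - b * c * conj F,
                  c + a - c * a * conj F} : Set ℂ) ∧
    a + b + c ∈ affineSpan ℝ ({a + b - a * b * conj F,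
                               b + c - b * c * conj F,
                               c + a - c * a * conj F} : Set ℂ) := by
  have ha0 : a ≠ 0 := by intro h; rw [h] at ha; simp at ha
  have hb0 : b ≠ 0 := by intro h; rw [h] at hb; simp at hb
  have hc0 : c ≠ 0 := by intro h; rw [h] at hc; simp at hc
  have hF0 : F ≠ 0 := by intro h; rw [h] at hF; simp at hF
  have hca : conj a = a⁻¹ := by
    apply eq_inv_of_mul_eq_one_left
    rw [mul_comm, Complex.mul_conj, Complex.normSq_eq_norm_sq, ha]; norm_num
  have hcb : conj b = b⁻¹ := by
    apply eq_inv_of_mul_eq_one_left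
    rw [mul_comm, Complex.mul_conj, Complex.normSq_eq_norm_sq, hb]; norm_num
  have hcc : conj c = c⁻¹ := by
    apply eq_inv_of_mul_eq_one_left
    rw [mul_comm, Complex.mul_conj, Complex.normSq_eq_norm_sq, hc]; norm_num
  have hcF : conj F = F⁻¹ := by
    apply eq_inv_of_mul_eq_one_left
    rw [mul_comm, Complex.mul_conj, Complex.normSq_eq_norm_sq, hF]; norm_num
  set k : ℂ := F * a⁻¹ * b⁻¹ * c⁻¹ with hk
  have h1 : conj ((a + b - a * b * conj F) - (b + c - b * c * conj F))
      = k * ((a + b - a * b * conj F) - (b + c - b * c * conj F)) := by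
    simp only [map_sub, map_add, map_mul, map_inv₀, Complex.conj_conj, hca, hcb, hcc, hcF, inv_inv, hk]
    field_simp
    ring
  have h3 : conj ((c + a - c * a * conj F) - (b + c - b * c * conj F))
      = k * ((c + a - c * a * conj F) - (b + c - b * c * conj F)) := by
    simp only [map_sub, map_add, map_mul, map_inv₀, Complex.conj_conj, hca, hcb, hcc, hcF, inv_inv, hk]
    field_simp
    ring
  have hH : conj ((a + b + c) - (b + c - b * c * conj F))
      = k * ((a + b + c) - (b + c - b * c * conj F)) := by
    simp only [map_sub, map_add, map_mul, map_inv₀, Complex.conj_conj, hca, hcb, hcc, hcF, inv_inv, hk]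
    field_simp
    ring
  have hne : (a + b - a * b * conj F) - (b + c - b * c * conj F) ≠ 0 ∨
      (c + a - c * a * conj F) - (b + c - b * c * conj F) ≠ 0 := by
    have hbc' : F ≠ b ∨ F ≠ c := by
      by_contra h
      push_neg at h
      exact hbc (h.1 ▸ h.2 ▸ rfl)
    rcases hbc' with h | h
    · left
      have heq : (a + b - a * b * conj F) - (b + c - b * c * conj F)
          = (a - c) * (1 - b * conj F) := by ring
      rw [heq]
      apply mul_ne_zero (sub_ne_zero.mpr hac)
      intro hz
      apply h
      have h2 : b * F⁻¹ = 1 := by rw [← hcF]; linear_combination -hz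
      exact ((mul_inv_eq_one₀ hF0).mp h2).symm
    · right
      have heq : (c + a - c * a * conj F) - (b + c - b * c * conj F)
          = (a - b) * (1 - c * conj F) := by ring
      rw [heq]
      apply mul_ne_zero (sub_ne_zero.mpr hab)
      intro hz
      apply h
      have h2 : c * F⁻¹ = 1 := by rw [← hcF]; linear_combination -hz
      exact ((mul_inv_eq_one₀ hF0).mp h2).symm
  exact collinear_aux _ _ _ _ k h1 h3 hH hne
end

section
/- Let a, b, c be pairwise distinct complex numbers with |a| = |b| = |c| = 1, and let F be a complex number with |F| = 1. Then the midpoint (F + a + b + c)/2 of F and the orthocenter a + b + c lies on the Simson line of F, i.e., it is collinear with the three feet (F + a + b - ab·conj(F))/2, (F + b + c - bc·conj(F))/2, (F + c + a - ca·conj(F))/2. -/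
open Complex ComplexConjugate

/-- For a triangle `a b c` inscribed in the unit circle and a point `F` on the unit
circle, the midpoint `(F + a + b + c)/2` of `F` and the orthocenter `a + b + c`
lies on the Simson line of `F`, i.e. it is collinear with the three feet of the
perpendiculars from `F` to the sidelines. -/
theorem midpoint_focus_orthocenter_on_simson (a b c F : ℂ)
    (hab : a ≠ b) (hbc : b ≠ c) (hac : a ≠ c)
    (ha : ‖a‖ = 1) (hb : ‖b‖ = 1) (hc : ‖c‖ = 1)
    (hF : ‖F‖ = 1) :
    Collinear ℝ ({(F + a + b + c) / 2,
                  (F + a + b - a * b * conj F) / 2,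
                  (F + b + c - b * c * conj F) / 2,
                  (F + c + a - c * a * conj F) / 2} : Set ℂ) := by
  have ha0 : a ≠ 0 := by intro h; simp [h] at ha
  have hb0 : b ≠ 0 := by intro h; simp [h] at hb
  have hc0 : c ≠ 0 := by intro h; simp [h] at hc
  have hF0 : F ≠ 0 := by intro h; simp [h] at hF
  have hca : conj a = a⁻¹ := (Complex.inv_eq_conj ha).symm
  have hcb : conj b = b⁻¹ := (Complex.inv_eq_conj hb).symm
  have hcc : conj c = c⁻¹ := (Complex.inv_eq_conj hc).symm
  have hcF : conj F = F⁻¹ := (Complex.inv_eq_conj hF).symm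
  obtain ⟨u, hu⟩ := IsAlgClosed.exists_pow_nat_eq (k := ℂ) (a * b * c / F) (n := 2) (by norm_num)
  have hu0 : u ≠ 0 := by
    intro h
    rw [h] at hu
    simp only [ne_eq, zero_pow, OfNat.ofNat_ne_zero, not_false_iff] at hu
    field_simp at hu
    exact mul_ne_zero (mul_ne_zero ha0 hb0) hc0 (by rw [← hu]; ring)
  have habsu : ‖u‖ = 1 := by
    have h2 : ‖u‖ ^ 2 = 1 := by
      rw [← norm_pow, hu, norm_div, norm_mul, norm_mul, ha, hb, hc, hF]; norm_num
    nlinarith [norm_nonneg u]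
  have hcu : conj u = u⁻¹ := (Complex.inv_eq_conj habsu).symm
  have key : ∀ z : ℂ, conj z * (a * b * c) = z * F → ∃ r : ℝ, z = (r : ℂ) * u := by
    intro z hz
    refine ⟨(z / u).re, ?_⟩
    have hre : conj (z / u) = z / u := by
      have habc : a * b * c = u ^ 2 * F := by rw [hu]; field_simp
      rw [habc] at hz
      have hz' : conj z * u ^ 2 = z :=
        mul_right_cancel₀ hF0 (by linear_combination hz)
      rw [map_div₀, hcu]
      field_simp
      linear_combination hz'
    have : ((z / u).re : ℂ) = z / u := Complex.conj_eq_iff_re.mp hre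
    rw [this]; field_simp
  obtain ⟨r1, hr1⟩ := key (c + a * b * conj F) (by
    simp only [map_add, map_mul, hca, hcb, hcc, hcF, Complex.conj_conj]
    field_simp
    rw [map_div₀, map_one, hcF, one_div, inv_inv]; ring)
  obtain ⟨r2, hr2⟩ := key (a + b * c * conj F) (by
    simp only [map_add, map_mul, hca, hcb, hcc, hcF, Complex.conj_conj]
    field_simp
    rw [map_div₀, map_one, hcF, one_div, inv_inv]; ring)
  obtain ⟨r3, hr3⟩ := key (b + c * a * conj F) (by
    simp only [map_add, map_mul, hca, hcb, hcc, hcF, Complex.conj_conj]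
    field_simp
    rw [map_div₀, map_one, hcF, one_div, inv_inv]; ring)
  rw [collinear_iff_of_mem (Set.mem_insert _ _)]
  refine ⟨u, ?_⟩
  intro p hp
  simp only [Set.mem_insert_iff, Set.mem_singleton_iff] at hp
  rcases hp with h | h | h | h
  · exact ⟨0, by rw [h]; simp⟩
  · exact ⟨-r1 / 2, by rw [h]; push_cast [Complex.real_smul, vadd_eq_add]; linear_combination -hr1 / 2⟩
  · exact ⟨-r2 / 2, by rw [h]; push_cast [Complex.real_smul, vadd_eq_add]; linear_combination -hr2 / 2⟩
  · exact ⟨-r3 / 2, by rw [h]; push_cast [Complex.real_smul, vadd_eq_add]; linear_combination -hr3 / 2⟩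
end

section
/- Let a, b, c be pairwise distinct complex numbers with |a| = |b| = |c| = 1, write s1 = a + b + c, s2 = ab + bc + ca, s3 = abc, and let F be a complex number with |F| = 1. Assume the feet (F + a + b - ab·conj(F))/2 and (F + b + c - bc·conj(F))/2 are distinct. Then the orthogonal projection of F onto the Simson line of F (the line through these feet) equals (3F + s1 - s2·conj(F) + s3·conj(F)^2)/4. (This point is the vertex of the parabola inscribed in the triangle with focus F.) -/
open Complex ComplexConjugate

set_option maxHeartbeats 3200000 in
/-- The vertex of an inscribed parabola: for a triangle `a b c` inscribed in the unit
circle, with `s1 = a+b+c`, `s2 = ab+bc+ca`, `s3 = abc`, and a point `F` on the unit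
circle, assuming the feet of `F` on sides `ab` and `bc` are distinct, the orthogonal
projection of `F` onto the Simson line of `F` (the real-affine line through the three
feet) equals `(3F + s1 - s2·conj F + s3·(conj F)^2)/4`. -/
theorem vertex_of_inparabola (a b c F : ℂ)
    (hab : a ≠ b) (hbc : b ≠ c) (hac : a ≠ c)
    (ha : ‖a‖ = 1) (hb : ‖b‖ = 1) (hc : ‖c‖ = 1)
    (hF : ‖F‖ = 1)
    (hfeet : (F + a + b - a * b * conj F) / 2 ≠ (F + b + c - b * c * conj F) / 2) :
    (EuclideanGeometry.orthogonalProjection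
        (affineSpan ℝ ({(F + a + b - a * b * conj F) / 2,
                        (F + b + c - b * c * conj F) / 2,
                        (F + c + a - c * a * conj F) / 2} : Set ℂ)) F : ℂ) =
      (3 * F + (a + b + c) - (a * b + b * c + c * a) * conj F
        + a * b * c * (conj F) ^ 2) / 4 := by
  have hmc : ∀ z : ℂ, ‖z‖ = 1 → conj z = z⁻¹ := by
    intro z hz
    apply eq_inv_of_mul_eq_one_right
    rw [Complex.mul_conj, Complex.normSq_eq_norm_sq, hz]
    norm_num
  have hzero : ∀ z : ℂ, ‖z‖ = 1 → z ≠ 0 := by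
    intro z hz h; rw [h] at hz; simp at hz
  have ka := hmc a ha
  have kb := hmc b hb
  have kc := hmc c hc
  have kF := hmc F hF
  have ha0 := hzero a ha
  have hb0 := hzero b hb
  have hc0 := hzero c hc
  have hF0 := hzero F hF
  have hca : c - a ≠ 0 := sub_ne_zero.2 (Ne.symm hac)
  set p1 : ℂ := (F + a + b - a * b * conj F) / 2 with hp1
  set p2 : ℂ := (F + b + c - b * c * conj F) / 2 with hp2
  set p3 : ℂ := (F + c + a - c * a * conj F) / 2 with hp3
  set Vx : ℂ := (3 * F + (a + b + c) - (a * b + b * c + c * a) * conj F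
        + a * b * c * (conj F) ^ 2) / 4 with hVx
  have hFb : F - b ≠ 0 := by
    intro h
    have hFb' : F = b := by linear_combination h
    apply hfeet
    rw [hp1, hp2, hFb', kb]
    field_simp
    ring
  -- real parameter for p3 on the line p1 p2
  have hden3 : (c - a) * (F - b) ≠ 0 := mul_ne_zero hca hFb
  have hden3' : conj ((c - a) * (F - b)) ≠ 0 := by
    rw [starRingEnd_apply]; exact star_ne_zero.mpr hden3
  set t3 : ℂ := ((c - b) * (F - a)) / ((c - a) * (F - b)) with ht3
  have ht3c : conj t3 = t3 := by
    rw [ht3, map_div₀, div_eq_div_iff hden3' hden3]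
    simp only [map_mul, map_sub, ka, kb, kc, kF]
    field_simp
    ring
  have ht3re : (t3.re : ℂ) = t3 := Complex.conj_eq_iff_re.mp ht3c
  have key3 : (t3.re : ℝ) • (p2 -ᵥ p1) +ᵥ p1 = p3 := by
    show (t3.re : ℝ) • (p2 - p1) + p1 = p3
    rw [Complex.real_smul, ht3re, ht3, hp1, hp2, hp3, kF]
    field_simp
    ring
  -- real parameter for Vx on the line p1 p2
  have hdenV : 2 * F * (c - a) ≠ 0 := mul_ne_zero (mul_ne_zero two_ne_zero hF0) hca
  have hdenV' : conj (2 * F * (c - a)) ≠ 0 := by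
    rw [starRingEnd_apply]; exact star_ne_zero.mpr hdenV
  set tV : ℂ := ((F - a) * (F + c)) / (2 * F * (c - a)) with htV
  have htVc : conj tV = tV := by
    rw [htV, map_div₀, div_eq_div_iff hdenV' hdenV]
    simp only [map_mul, map_sub, map_add, map_ofNat, ka, kb, kc, kF]
    field_simp
    ring
  have htVre : (tV.re : ℂ) = tV := Complex.conj_eq_iff_re.mp htVc
  have keyV : (tV.re : ℝ) • (p2 -ᵥ p1) +ᵥ p1 = Vx := by
    show (tV.re : ℝ) • (p2 - p1) + p1 = Vx
    rw [Complex.real_smul, htVre, htV, hp1, hp2, hVx, kF]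
    field_simp
    ring
  -- the span of the three feet is the span of the first two
  have spaneq : affineSpan ℝ ({p1, p2, p3} : Set ℂ) = affineSpan ℝ ({p1, p2} : Set ℂ) := by
    apply le_antisymm
    · rw [affineSpan_le]
      intro x hx
      rcases hx with h | h | h
      · exact h ▸ left_mem_affineSpan_pair ℝ p1 p2
      · exact h ▸ right_mem_affineSpan_pair ℝ p1 p2
      · rw [Set.mem_singleton_iff] at h
        rw [h, ← key3]
        exact smul_vsub_vadd_mem_affineSpan_pair _ _ _
    · apply affineSpan_mono
      intro x hx
      simp only [Set.mem_insert_iff, Set.mem_singleton_iff] at hx ⊢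
      tauto
  have hVmem : Vx ∈ affineSpan ℝ ({p1, p2, p3} : Set ℂ) := by
    rw [spaneq, ← keyV]
    exact smul_vsub_vadd_mem_affineSpan_pair _ _ _
  have hdir : (affineSpan ℝ ({p1, p2, p3} : Set ℂ)).direction = ℝ ∙ (p1 - p2) := by
    rw [spaneq, direction_affineSpan, vectorSpan_pair]
    rfl
  have hperp : F - Vx ∈ (affineSpan ℝ ({p1, p2, p3} : Set ℂ)).directionᗮ := by
    rw [hdir]
    intro v hv
    obtain ⟨r, rfl⟩ := Submodule.mem_span_singleton.mp hv
    rw [real_inner_smul_left]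
    have hd : p1 - p2 = (a - c) * (F - b) / (2 * F) := by
      rw [hp1, hp2, kF]
      field_simp
      ring
    have hFV : F - Vx = (F - a) * (F - b) * (F - c) / (4 * F ^ 2) := by
      rw [hVx, kF]
      field_simp
      ring
    have habc : a * b * c ≠ 0 := mul_ne_zero (mul_ne_zero ha0 hb0) hc0
    have hdc : conj (p1 - p2) = (a - c) * (F - b) / (2 * (a * b * c)) := by
      rw [hd, map_div₀, map_mul, map_mul, map_sub, map_sub, map_ofNat, ka, kb, kc, kF]
      rw [div_eq_div_iff (mul_ne_zero two_ne_zero (inv_ne_zero hF0))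
        (mul_ne_zero two_ne_zero habc)]
      field_simp
      ring
    have hFVc : conj (F - Vx) = -((F - a) * (F - b) * (F - c)) / (4 * (a * b * c * F)) := by
      rw [hFV, map_div₀, map_mul, map_mul, map_mul, map_sub, map_sub, map_sub, map_pow,
        map_ofNat, ka, kb, kc, kF]
      rw [div_eq_div_iff (mul_ne_zero (by norm_num) (pow_ne_zero 2 (inv_ne_zero hF0)))
        (mul_ne_zero (by norm_num) (mul_ne_zero habc hF0))]
      field_simp
      ring
    have hz : conj (conj (p1 - p2) * (F - Vx)) = -(conj (p1 - p2) * (F - Vx)) := by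
      rw [map_mul, Complex.conj_conj, hdc, hFVc, hd, hFV, div_mul_div_comm,
        div_mul_div_comm, ← neg_div]
      rw [div_eq_div_iff
        (mul_ne_zero (mul_ne_zero two_ne_zero hF0) (mul_ne_zero (by norm_num) (mul_ne_zero habc hF0)))
        (mul_ne_zero (mul_ne_zero two_ne_zero habc) (mul_ne_zero (by norm_num) (pow_ne_zero 2 hF0)))]
      ring
    have hre : (conj (p1 - p2) * (F - Vx)).re = 0 := by
      have h := congrArg Complex.re hz
      simp only [Complex.conj_re, Complex.neg_re] at h
      linarith
    rw [Complex.inner, mul_comm (F - Vx), hre, mul_zero]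
  have key := EuclideanGeometry.orthogonalProjection_vadd_eq_self hVmem hperp
  have hF' : (F - Vx) +ᵥ Vx = F := by
    show (F - Vx) + Vx = F
    ring
  rw [hF'] at key
  rw [key]
end

section
/- Let a, b, c be pairwise distinct complex numbers with |a| = |b| = |c| = 1, write s1 = a + b + c, s2 = ab + bc + ca, s3 = abc, and let F be a complex number with |F| = 1. Assume the reflections a + b - ab·conj(F) and b + c - bc·conj(F) are distinct. Then the orthogonal projection of F onto the line through the three reflections of F in the sidelines (the directrix of the inscribed parabola with focus F) equals (F + s1 - s2·conj(F) + s3·conj(F)^2)/2; in particular this projection is the reflection of F about the orthogonal projection of F onto the Simson line of F. -/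
open Complex ComplexConjugate RealInnerProductSpace

private lemma proj_eq_of' {s : AffineSubspace ℝ ℂ} [Nonempty s]
    [s.direction.HasOrthogonalProjection] {F p : ℂ} (hp : p ∈ s)
    (ho : p -ᵥ F ∈ s.directionᗮ) :
    (EuclideanGeometry.orthogonalProjection s F : ℂ) = p := by
  have h := EuclideanGeometry.inter_eq_singleton_orthogonalProjection (s := s) F
  have hmem : p ∈ (s : Set ℂ) ∩ (AffineSubspace.mk' F s.directionᗮ : Set ℂ) :=
    ⟨hp, (AffineSubspace.mem_mk').mpr ho⟩
  rw [h] at hmem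
  exact (Set.mem_singleton_iff.mp hmem).symm

private lemma inner_zero_of' {u v : ℂ} (h : conj u * v + u * conj v = 0) :
    ⟪u, v⟫ = 0 := by
  rw [Complex.inner]
  have h2 : (conj u * v) + conj (conj u * v) = 0 := by
    rw [map_mul, Complex.conj_conj]; linear_combination h
  rw [Complex.add_conj] at h2
  have h3 : (2:ℝ) * (conj u * v).re = 0 := by exact_mod_cast h2
  rw [mul_comm]; linarith

private lemma proj_eq_core (x1 x2 x3 F p : ℂ) (h12 : x1 ≠ x2)
    (hreal : conj ((p - x1) / (x2 - x1)) = (p - x1) / (x2 - x1))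
    (horth : ∀ x ∈ ({x1, x2, x3} : Set ℂ), ∀ y ∈ ({x1, x2, x3} : Set ℂ),
      ⟪x - y, p - F⟫ = 0) :
    (EuclideanGeometry.orthogonalProjection
        (affineSpan ℝ ({x1, x2, x3} : Set ℂ)) F : ℂ) = p := by
  have hne : x2 - x1 ≠ 0 := sub_ne_zero.mpr h12.symm
  have hx1 : x1 ∈ affineSpan ℝ ({x1, x2, x3} : Set ℂ) :=
    subset_affineSpan ℝ _ (by simp)
  have hx2 : x2 ∈ affineSpan ℝ ({x1, x2, x3} : Set ℂ) :=
    subset_affineSpan ℝ _ (by simp)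
  set lam : ℂ := (p - x1) / (x2 - x1) with hlam
  have hr : ((lam.re : ℝ) : ℂ) = lam := Complex.conj_eq_iff_re.mp hreal
  have hp : p ∈ affineSpan ℝ ({x1, x2, x3} : Set ℂ) := by
    have hm := AffineSubspace.smul_vsub_vadd_mem _ (lam.re) hx2 hx1 hx1
    have : (lam.re : ℝ) • (x2 -ᵥ x1) +ᵥ x1 = p := by
      rw [vsub_eq_sub, vadd_eq_add, Complex.real_smul, hr, hlam,
        div_mul_cancel₀ _ hne]
      ring
    rwa [this] at hm
  refine proj_eq_of' hp ?_
  rw [direction_affineSpan, vsub_eq_sub]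
  rw [Submodule.mem_orthogonal]
  intro u hu
  rw [vectorSpan_def] at hu
  induction hu using Submodule.span_induction with
  | mem x hx =>
      obtain ⟨v, hv, w, hw, rfl⟩ := hx
      exact horth v hv w hw
  | zero => exact inner_zero_left _
  | add x y hx hy px py => rw [inner_add_left, px, py]; ring
  | smul r x hx px => rw [real_inner_smul_left, px]; ring

set_option maxHeartbeats 1000000 in
/-- For a triangle `a b c` inscribed in the unit circle, with `s1 = a+b+c`,
`s2 = ab+bc+ca`, `s3 = abc`, and a point `F` on the unit circle, assuming the
reflections of `F` in sides `ab` and `bc` are distinct, the orthogonal projection of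
`F` onto the directrix of the inscribed parabola with focus `F` (the line through the
three reflections of `F` in the sidelines) equals
`(F + s1 - s2·conj F + s3·(conj F)^2)/2`; in particular, it is the reflection of `F`
about the orthogonal projection of `F` onto the Simson line of `F` (the line through
the three feet). -/
theorem projection_onto_directrix (a b c F : ℂ)
    (hab : a ≠ b) (hbc : b ≠ c) (hac : a ≠ c)
    (ha : ‖a‖ = 1) (hb : ‖b‖ = 1) (hc : ‖c‖ = 1)
    (hF : ‖F‖ = 1)
    (hrefl : a + b - a * b * conj F ≠ b + c - b * c * conj F) :
    (EuclideanGeometry.orthogonalProjection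
        (affineSpan ℝ ({a + b - a * b * conj F,
                        b + c - b * c * conj F,
                        c + a - c * a * conj F} : Set ℂ)) F : ℂ) =
      (F + (a + b + c) - (a * b + b * c + c * a) * conj F
        + a * b * c * (conj F) ^ 2) / 2 ∧
    (EuclideanGeometry.orthogonalProjection
        (affineSpan ℝ ({a + b - a * b * conj F,
                        b + c - b * c * conj F,
                        c + a - c * a * conj F} : Set ℂ)) F : ℂ) =
      2 * (EuclideanGeometry.orthogonalProjection
        (affineSpan ℝ ({(F + a + b - a * b * conj F) / 2,
                        (F + b + c - b * c * conj F) / 2,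
                        (F + c + a - c * a * conj F) / 2} : Set ℂ)) F : ℂ) - F := by
  have hone : ∀ z : ℂ, ‖z‖ = 1 → z * conj z = 1 := by
    intro z hz
    rw [Complex.mul_conj]
    norm_cast
    rw [← Complex.sq_norm, hz]; norm_num
  have ha1 := hone a ha
  have hb1 := hone b hb
  have hc1 := hone c hc
  have hF1 := hone F hF
  have key1 : (EuclideanGeometry.orthogonalProjection
        (affineSpan ℝ ({a + b - a * b * conj F,
                        b + c - b * c * conj F,
                        c + a - c * a * conj F} : Set ℂ)) F : ℂ) =
      (F + (a + b + c) - (a * b + b * c + c * a) * conj F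
        + a * b * c * (conj F) ^ 2) / 2 := by
    apply proj_eq_core _ _ _ _ _ hrefl
    · have hne : b + c - b * c * conj F - (a + b - a * b * conj F) ≠ 0 :=
        sub_ne_zero.mpr hrefl.symm
      have hcne : conj (b + c - b * c * conj F - (a + b - a * b * conj F)) ≠ 0 := by
        intro h
        apply hne
        have h2 := congrArg conj h
        simpa using h2
      rw [map_div₀, div_eq_div_iff hcne hne]
      simp only [map_sub, map_add, map_mul, map_pow, map_div₀, map_ofNat, Complex.conj_conj]
      linear_combination (((1:ℂ)/2)*F*(conj c) + ((-1:ℂ)/2)*F^2*(conj b)*(conj c) + ((-1:ℂ)/2)*c*(conj F) + ((1:ℂ)/2)*c*F*(conj b)*(conj F) + ((-1:ℂ)/2)*b*F*(conj c)*(conj F) + ((1:ℂ)/2)*b*F^2*(conj b)*(conj c)*(conj F) + ((1:ℂ)/2)*b*c*(conj F)^2 + ((-1:ℂ)/2)*b*c*F*(conj b)*(conj F)^2)*ha1 + (((-1:ℂ)/2)*F*(conj c) + ((1:ℂ)/2)*F*(conj a) + ((1:ℂ)/2)*F^2*(conj c)*(conj F) + ((1:ℂ)/2)*c*(conj F) +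 ((-1:ℂ)/2)*c*F*(conj F)^2 + ((-1:ℂ)/2)*c*F^2*(conj a)*(conj c)*(conj F) + ((-1:ℂ)/2)*a*(conj F) + ((1:ℂ)/2)*a*c*F*(conj c)*(conj F)^2)*hb1 + (((-1:ℂ)/2)*F*(conj a) + ((-1:ℂ)/2)*F^2*(conj a)*(conj F) + ((1:ℂ)/2)*F^2*(conj a)*(conj b) + ((1:ℂ)/2)*b*F*(conj a)*(conj F) + ((1:ℂ)/2)*a*(conj F) + ((1:ℂ)/2)*a*F*(conj F)^2 + ((-1:ℂ)/2)*a*F*(conj b)*(conj F) + ((-1:ℂ)/2)*a*b*(conj F)^2)*hc1 + (((1:ℂ)/2)*F*(conj c) + ((-1:ℂ)/2)*F*(conj a) + ((-1:ℂ)/2)*c*(conj F) + ((1:ℂ)/2)*c*(conj b) + ((-1:ℂ)/2)*b*(conj c) + ((1:ℂ)/2)*b*(conj a) + ((1:ℂ)/2)*a*(conj F) + ((-1:ℂ)/2)*a*(conj b))*hF1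
    · intro x hx y hy
      simp only [Set.mem_insert_iff, Set.mem_singleton_iff] at hx hy
      rcases hx with rfl | rfl | rfl <;> rcases hy with rfl | rfl | rfl
      · apply inner_zero_of'
        simp only [map_sub, map_add, map_mul, map_pow, map_div₀, map_ofNat, Complex.conj_conj]
        ring
      · apply inner_zero_of'
        simp only [map_sub, map_add, map_mul, map_pow, map_div₀, map_ofNat, Complex.conj_conj]
        linear_combination (((1:ℂ)/1) + ((-1:ℂ)/2)*F*(conj c) + ((-1:ℂ)/1)*F*(conj b) + ((1:ℂ)/2)*F^2*(conj b)*(conj c) + ((-1:ℂ)/2)*c*(conj F) + ((1:ℂ)/2)*c*F*(conj b)*(conj F) + ((-1:ℂ)/1)*b*(conj F) + ((1:ℂ)/2)*b*F*(conj c)*(conj F) + ((1:ℂ)/1)*b*F*(conj b)*(conj F) + ((-1:ℂ)/2)*b*F^2*(conj b)*(conj c)*(conj F) + ((1:ℂ)/2)*b*c*(conj F)^2 + ((-1:ℂ)/2)*b*c*F*(conj b)*(conj F)^2)*ha1 + (((1:ℂ)/1)*F*(conj F) + ((1:ℂ)/2)*F*(conj c) + ((-1:ℂ)/2)*F*(conj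 a) + ((-1:ℂ)/2)*F^2*(conj c)*(conj F) + ((1:ℂ)/2)*c*(conj F) + ((-1:ℂ)/2)*c*F*(conj F)^2 + ((-1:ℂ)/1)*c*F*(conj c)*(conj F) + ((1:ℂ)/2)*c*F^2*(conj a)*(conj c)*(conj F) + ((-1:ℂ)/2)*a*(conj F) + ((1:ℂ)/2)*a*c*F*(conj c)*(conj F)^2)*hb1 + (((-1:ℂ)/1) + ((-1:ℂ)/1)*F*(conj F) + ((1:ℂ)/1)*F*(conj b) + ((1:ℂ)/2)*F*(conj a) + ((1:ℂ)/2)*F^2*(conj a)*(conj F) + ((-1:ℂ)/2)*F^2*(conj a)*(conj b) + ((1:ℂ)/1)*b*(conj F) + ((-1:ℂ)/2)*b*F*(conj a)*(conj F) + ((1:ℂ)/2)*a*(conj F) + ((1:ℂ)/2)*a*F*(conj F)^2 + ((-1:ℂ)/2)*a*F*(conj b)*(conj F) + ((-1:ℂ)/2)*a*b*(conj F)^2)*hc1 + (((-1:ℂ)/2)*F*(conj c) + ((1:ℂ)/2)*F*(conj a) + ((-1:ℂ)/2)*c*(conj F) + ((1:ℂ)/2)*c*(conj b) + ((1:ℂ)/2)*b*(conj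 c) + ((-1:ℂ)/2)*b*(conj a) + ((1:ℂ)/2)*a*(conj F) + ((-1:ℂ)/2)*a*(conj b))*hF1
      · apply inner_zero_of'
        simp only [map_sub, map_add, map_mul, map_pow, map_div₀, map_ofNat, Complex.conj_conj]
        linear_combination (((1:ℂ)/2)*F*(conj c) + ((-1:ℂ)/2)*F*(conj b) + ((1:ℂ)/2)*c*(conj F) + ((-1:ℂ)/1)*c*F*(conj c)*(conj F) + ((1:ℂ)/2)*c*F^2*(conj b)*(conj c)*(conj F) + ((-1:ℂ)/2)*b*(conj F) + ((1:ℂ)/1)*b*F*(conj b)*(conj F) + ((-1:ℂ)/2)*b*F^2*(conj b)*(conj c)*(conj F) + ((1:ℂ)/2)*b*c*F*(conj c)*(conj F)^2 + ((-1:ℂ)/2)*b*c*F*(conj b)*(conj F)^2)*ha1 + (((1:ℂ)/1) + ((1:ℂ)/1)*F*(conj F) + ((-1:ℂ)/2)*F*(conj c) + ((-1:ℂ)/1)*F*(conj a) + ((-1:ℂ)/2)*F^2*(conj c)*(conj F) + ((1:ℂ)/2)*F^2*(conj a)*(conj c) + ((-1:ℂ)/2)*c*(conj F) + ((-1:ℂ)/2)*c*F*(conj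 F)^2 + ((1:ℂ)/2)*c*F*(conj a)*(conj F) + ((-1:ℂ)/1)*a*(conj F) + ((1:ℂ)/2)*a*F*(conj c)*(conj F) + ((1:ℂ)/2)*a*c*(conj F)^2)*hb1 + (((-1:ℂ)/1) + ((-1:ℂ)/1)*F*(conj F) + ((1:ℂ)/2)*F*(conj b) + ((1:ℂ)/1)*F*(conj a) + ((1:ℂ)/2)*F^2*(conj b)*(conj F) + ((-1:ℂ)/2)*F^2*(conj a)*(conj b) + ((1:ℂ)/2)*b*(conj F) + ((1:ℂ)/2)*b*F*(conj F)^2 + ((-1:ℂ)/2)*b*F*(conj a)*(conj F) + ((1:ℂ)/1)*a*(conj F) + ((-1:ℂ)/2)*a*F*(conj b)*(conj F) + ((-1:ℂ)/2)*a*b*(conj F)^2)*hc1 + (((-1:ℂ)/2)*F*(conj c) + ((1:ℂ)/2)*F*(conj b) + ((-1:ℂ)/2)*c*(conj F) + ((1:ℂ)/2)*c*(conj a) + ((1:ℂ)/2)*b*(conj F) + ((-1:ℂ)/2)*b*(conj a) + ((1:ℂ)/2)*a*(conj c) + ((-1:ℂ)/2)*a*(conj b))*hF1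
      · apply inner_zero_of'
        simp only [map_sub, map_add, map_mul, map_pow, map_div₀, map_ofNat, Complex.conj_conj]
        linear_combination (((-1:ℂ)/1) + ((1:ℂ)/2)*F*(conj c) + ((1:ℂ)/1)*F*(conj b) + ((-1:ℂ)/2)*F^2*(conj b)*(conj c) + ((1:ℂ)/2)*c*(conj F) + ((-1:ℂ)/2)*c*F*(conj b)*(conj F) + ((1:ℂ)/1)*b*(conj F) + ((-1:ℂ)/2)*b*F*(conj c)*(conj F) + ((-1:ℂ)/1)*b*F*(conj b)*(conj F) + ((1:ℂ)/2)*b*F^2*(conj b)*(conj c)*(conj F) + ((-1:ℂ)/2)*b*c*(conj F)^2 + ((1:ℂ)/2)*b*c*F*(conj b)*(conj F)^2)*ha1 + (((-1:ℂ)/1)*F*(conj F) + ((-1:ℂ)/2)*F*(conj c) + ((1:ℂ)/2)*F*(conj a) + ((1:ℂ)/2)*F^2*(conj c)*(conj F) + ((-1:ℂ)/2)*c*(conj F) + ((1:ℂ)/2)*c*F*(conj F)^2 + ((1:ℂ)/1)*c*F*(conj c)*(conj F) + ((-1:ℂ)/2)*c*F^2*(conj a)*(conj c)*(conj F) + ((1:ℂ)/2)*a*(conj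 F) + ((-1:ℂ)/2)*a*c*F*(conj c)*(conj F)^2)*hb1 + (((1:ℂ)/1) + ((1:ℂ)/1)*F*(conj F) + ((-1:ℂ)/1)*F*(conj b) + ((-1:ℂ)/2)*F*(conj a) + ((-1:ℂ)/2)*F^2*(conj a)*(conj F) + ((1:ℂ)/2)*F^2*(conj a)*(conj b) + ((-1:ℂ)/1)*b*(conj F) + ((1:ℂ)/2)*b*F*(conj a)*(conj F) + ((-1:ℂ)/2)*a*(conj F) + ((-1:ℂ)/2)*a*F*(conj F)^2 + ((1:ℂ)/2)*a*F*(conj b)*(conj F) + ((1:ℂ)/2)*a*b*(conj F)^2)*hc1 + (((1:ℂ)/2)*F*(conj c) + ((-1:ℂ)/2)*F*(conj a) + ((1:ℂ)/2)*c*(conj F) + ((-1:ℂ)/2)*c*(conj b) + ((-1:ℂ)/2)*b*(conj c) + ((1:ℂ)/2)*b*(conj a) + ((-1:ℂ)/2)*a*(conj F) + ((1:ℂ)/2)*a*(conj b))*hF1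
      · apply inner_zero_of'
        simp only [map_sub, map_add, map_mul, map_pow, map_div₀, map_ofNat, Complex.conj_conj]
        ring
      · apply inner_zero_of'
        simp only [map_sub, map_add, map_mul, map_pow, map_div₀, map_ofNat, Complex.conj_conj]
        linear_combination (((-1:ℂ)/1) + ((1:ℂ)/1)*F*(conj c) + ((1:ℂ)/2)*F*(conj b) + ((-1:ℂ)/2)*F^2*(conj b)*(conj c) + ((1:ℂ)/1)*c*(conj F) + ((-1:ℂ)/1)*c*F*(conj c)*(conj F) + ((-1:ℂ)/2)*c*F*(conj b)*(conj F) + ((1:ℂ)/2)*c*F^2*(conj b)*(conj c)*(conj F) + ((1:ℂ)/2)*b*(conj F) + ((-1:ℂ)/2)*b*F*(conj c)*(conj F) + ((-1:ℂ)/2)*b*c*(conj F)^2 + ((1:ℂ)/2)*b*c*F*(conj c)*(conj F)^2)*ha1 + (((1:ℂ)/1) + ((-1:ℂ)/1)*F*(conj c) + ((-1:ℂ)/2)*F*(conj a) + ((1:ℂ)/2)*F^2*(conj a)*(conj c) + ((-1:ℂ)/1)*c*(conj F) + ((1:ℂ)/1)*c*F*(conj c)*(conj F) + ((1:ℂ)/2)*c*F*(conj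 a)*(conj F) + ((-1:ℂ)/2)*c*F^2*(conj a)*(conj c)*(conj F) + ((-1:ℂ)/2)*a*(conj F) + ((1:ℂ)/2)*a*F*(conj c)*(conj F) + ((1:ℂ)/2)*a*c*(conj F)^2 + ((-1:ℂ)/2)*a*c*F*(conj c)*(conj F)^2)*hb1 + (((-1:ℂ)/2)*F*(conj b) + ((1:ℂ)/2)*F*(conj a) + ((1:ℂ)/2)*F^2*(conj b)*(conj F) + ((-1:ℂ)/2)*F^2*(conj a)*(conj F) + ((-1:ℂ)/2)*b*(conj F) + ((1:ℂ)/2)*b*F*(conj F)^2 + ((1:ℂ)/2)*a*(conj F) + ((-1:ℂ)/2)*a*F*(conj F)^2)*hc1 + (((1:ℂ)/2)*F*(conj b) + ((-1:ℂ)/2)*F*(conj a) + ((-1:ℂ)/2)*c*(conj b) + ((1:ℂ)/2)*c*(conj a) + ((1:ℂ)/2)*b*(conj F) + ((-1:ℂ)/2)*b*(conj c) + ((-1:ℂ)/2)*a*(conj F) + ((1:ℂ)/2)*a*(conj c))*hF1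
      · apply inner_zero_of'
        simp only [map_sub, map_add, map_mul, map_pow, map_div₀, map_ofNat, Complex.conj_conj]
        linear_combination (((-1:ℂ)/2)*F*(conj c) + ((1:ℂ)/2)*F*(conj b) + ((-1:ℂ)/2)*c*(conj F) + ((1:ℂ)/1)*c*F*(conj c)*(conj F) + ((-1:ℂ)/2)*c*F^2*(conj b)*(conj c)*(conj F) + ((1:ℂ)/2)*b*(conj F) + ((-1:ℂ)/1)*b*F*(conj b)*(conj F) + ((1:ℂ)/2)*b*F^2*(conj b)*(conj c)*(conj F) + ((-1:ℂ)/2)*b*c*F*(conj c)*(conj F)^2 + ((1:ℂ)/2)*b*c*F*(conj b)*(conj F)^2)*ha1 + (((-1:ℂ)/1) + ((-1:ℂ)/1)*F*(conj F) + ((1:ℂ)/2)*F*(conj c) + ((1:ℂ)/1)*F*(conj a) + ((1:ℂ)/2)*F^2*(conj c)*(conj F) + ((-1:ℂ)/2)*F^2*(conj a)*(conj c) + ((1:ℂ)/2)*c*(conj F) + ((1:ℂ)/2)*c*F*(conj F)^2 + ((-1:ℂ)/2)*c*F*(conj a)*(conj F) + ((1:ℂ)/1)*a*(conj F) + ((-1:ℂ)/2)*a*F*(conj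 c)*(conj F) + ((-1:ℂ)/2)*a*c*(conj F)^2)*hb1 + (((1:ℂ)/1) + ((1:ℂ)/1)*F*(conj F) + ((-1:ℂ)/2)*F*(conj b) + ((-1:ℂ)/1)*F*(conj a) + ((-1:ℂ)/2)*F^2*(conj b)*(conj F) + ((1:ℂ)/2)*F^2*(conj a)*(conj b) + ((-1:ℂ)/2)*b*(conj F) + ((-1:ℂ)/2)*b*F*(conj F)^2 + ((1:ℂ)/2)*b*F*(conj a)*(conj F) + ((-1:ℂ)/1)*a*(conj F) + ((1:ℂ)/2)*a*F*(conj b)*(conj F) + ((1:ℂ)/2)*a*b*(conj F)^2)*hc1 + (((1:ℂ)/2)*F*(conj c) + ((-1:ℂ)/2)*F*(conj b) + ((1:ℂ)/2)*c*(conj F) + ((-1:ℂ)/2)*c*(conj a) + ((-1:ℂ)/2)*b*(conj F) + ((1:ℂ)/2)*b*(conj a) + ((-1:ℂ)/2)*a*(conj c) + ((1:ℂ)/2)*a*(conj b))*hF1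
      · apply inner_zero_of'
        simp only [map_sub, map_add, map_mul, map_pow, map_div₀, map_ofNat, Complex.conj_conj]
        linear_combination (((1:ℂ)/1) + ((-1:ℂ)/1)*F*(conj c) + ((-1:ℂ)/2)*F*(conj b) + ((1:ℂ)/2)*F^2*(conj b)*(conj c) + ((-1:ℂ)/1)*c*(conj F) + ((1:ℂ)/1)*c*F*(conj c)*(conj F) + ((1:ℂ)/2)*c*F*(conj b)*(conj F) + ((-1:ℂ)/2)*c*F^2*(conj b)*(conj c)*(conj F) + ((-1:ℂ)/2)*b*(conj F) + ((1:ℂ)/2)*b*F*(conj c)*(conj F) + ((1:ℂ)/2)*b*c*(conj F)^2 + ((-1:ℂ)/2)*b*c*F*(conj c)*(conj F)^2)*ha1 + (((-1:ℂ)/1) + ((1:ℂ)/1)*F*(conj c) + ((1:ℂ)/2)*F*(conj a) + ((-1:ℂ)/2)*F^2*(conj a)*(conj c) + ((1:ℂ)/1)*c*(conj F) + ((-1:ℂ)/1)*c*F*(conj c)*(conj F) + ((-1:ℂ)/2)*c*F*(conj a)*(conj F) + ((1:ℂ)/2)*c*F^2*(conj a)*(conj c)*(conj F) + ((1:ℂ)/2)*a*(conj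 F) + ((-1:ℂ)/2)*a*F*(conj c)*(conj F) + ((-1:ℂ)/2)*a*c*(conj F)^2 + ((1:ℂ)/2)*a*c*F*(conj c)*(conj F)^2)*hb1 + (((1:ℂ)/2)*F*(conj b) + ((-1:ℂ)/2)*F*(conj a) + ((-1:ℂ)/2)*F^2*(conj b)*(conj F) + ((1:ℂ)/2)*F^2*(conj a)*(conj F) + ((1:ℂ)/2)*b*(conj F) + ((-1:ℂ)/2)*b*F*(conj F)^2 + ((-1:ℂ)/2)*a*(conj F) + ((1:ℂ)/2)*a*F*(conj F)^2)*hc1 + (((-1:ℂ)/2)*F*(conj b) + ((1:ℂ)/2)*F*(conj a) + ((1:ℂ)/2)*c*(conj b) + ((-1:ℂ)/2)*c*(conj a) + ((-1:ℂ)/2)*b*(conj F) + ((1:ℂ)/2)*b*(conj c) + ((1:ℂ)/2)*a*(conj F) + ((-1:ℂ)/2)*a*(conj c))*hF1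
      · apply inner_zero_of'
        simp only [map_sub, map_add, map_mul, map_pow, map_div₀, map_ofNat, Complex.conj_conj]
        ring
  have hrefl2 : (F + a + b - a * b * conj F) / 2 ≠ (F + b + c - b * c * conj F) / 2 := by
    intro h
    exact hrefl (by linear_combination 2 * h)
  have key2 : (EuclideanGeometry.orthogonalProjection
        (affineSpan ℝ ({(F + a + b - a * b * conj F) / 2,
                        (F + b + c - b * c * conj F) / 2,
                        (F + c + a - c * a * conj F) / 2} : Set ℂ)) F : ℂ) =
      (F + ((F + (a + b + c) - (a * b + b * c + c * a) * conj F
        + a * b * c * (conj F) ^ 2) / 2)) / 2 := by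
    apply proj_eq_core _ _ _ _ _ hrefl2
    · have hne : (F + b + c - b * c * conj F) / 2 - (F + a + b - a * b * conj F) / 2 ≠ 0 :=
        sub_ne_zero.mpr hrefl2.symm
      have hcne : conj ((F + b + c - b * c * conj F) / 2 - (F + a + b - a * b * conj F) / 2) ≠ 0 := by
        intro h
        apply hne
        have h2 := congrArg conj h
        simpa using h2
      rw [map_div₀, div_eq_div_iff hcne hne]
      simp only [map_sub, map_add, map_mul, map_pow, map_div₀, map_ofNat, Complex.conj_conj]
      linear_combination (((1:ℂ)/8)*F*(conj c) + ((-1:ℂ)/8)*F^2*(conj b)*(conj c) + ((-1:ℂ)/8)*c*(conj F) + ((1:ℂ)/8)*c*F*(conj b)*(conj F) + ((-1:ℂ)/8)*b*F*(conj c)*(conj F) + ((1:ℂ)/8)*b*F^2*(conj b)*(conj c)*(conj F) + ((1:ℂ)/8)*b*c*(conj F)^2 + ((-1:ℂ)/8)*b*c*F*(conj b)*(conj F)^2)*ha1 + (((-1:ℂ)/8)*F*(conj c) + ((1:ℂ)/8)*F*(conj a) + ((1:ℂ)/8)*F^2*(conj c)*(conj F) + ((1:ℂ)/8)*c*(conj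 F) + ((-1:ℂ)/8)*c*F*(conj F)^2 + ((-1:ℂ)/8)*c*F^2*(conj a)*(conj c)*(conj F) + ((-1:ℂ)/8)*a*(conj F) + ((1:ℂ)/8)*a*c*F*(conj c)*(conj F)^2)*hb1 + (((-1:ℂ)/8)*F*(conj a) + ((-1:ℂ)/8)*F^2*(conj a)*(conj F) + ((1:ℂ)/8)*F^2*(conj a)*(conj b) + ((1:ℂ)/8)*b*F*(conj a)*(conj F) + ((1:ℂ)/8)*a*(conj F) + ((1:ℂ)/8)*a*F*(conj F)^2 + ((-1:ℂ)/8)*a*F*(conj b)*(conj F) + ((-1:ℂ)/8)*a*b*(conj F)^2)*hc1 + (((1:ℂ)/8)*F*(conj c) + ((-1:ℂ)/8)*F*(conj a) + ((-1:ℂ)/8)*c*(conj F) + ((1:ℂ)/8)*c*(conj b) + ((-1:ℂ)/8)*b*(conj c) + ((1:ℂ)/8)*b*(conj a) + ((1:ℂ)/8)*a*(conj F) + ((-1:ℂ)/8)*a*(conj b))*hF1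
    · intro x hx y hy
      simp only [Set.mem_insert_iff, Set.mem_singleton_iff] at hx hy
      rcases hx with rfl | rfl | rfl <;> rcases hy with rfl | rfl | rfl
      · apply inner_zero_of'
        simp only [map_sub, map_add, map_mul, map_pow, map_div₀, map_ofNat, Complex.conj_conj]
        ring
      · apply inner_zero_of'
        simp only [map_sub, map_add, map_mul, map_pow, map_div₀, map_ofNat, Complex.conj_conj]
        linear_combination (((1:ℂ)/4) + ((-1:ℂ)/8)*F*(conj c) + ((-1:ℂ)/4)*F*(conj b) + ((1:ℂ)/8)*F^2*(conj b)*(conj c) + ((-1:ℂ)/8)*c*(conj F) + ((1:ℂ)/8)*c*F*(conj b)*(conj F) + ((-1:ℂ)/4)*b*(conj F) + ((1:ℂ)/8)*b*F*(conj c)*(conj F) + ((1:ℂ)/4)*b*F*(conj b)*(conj F) + ((-1:ℂ)/8)*b*F^2*(conj b)*(conj c)*(conj F) + ((1:ℂ)/8)*b*c*(conj F)^2 + ((-1:ℂ)/8)*b*c*F*(conj b)*(conj F)^2)*ha1 + (((1:ℂ)/4)*F*(conj F) + ((1:ℂ)/8)*F*(conj c) + ((-1:ℂ)/8)*F*(conj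 a) + ((-1:ℂ)/8)*F^2*(conj c)*(conj F) + ((1:ℂ)/8)*c*(conj F) + ((-1:ℂ)/8)*c*F*(conj F)^2 + ((-1:ℂ)/4)*c*F*(conj c)*(conj F) + ((1:ℂ)/8)*c*F^2*(conj a)*(conj c)*(conj F) + ((-1:ℂ)/8)*a*(conj F) + ((1:ℂ)/8)*a*c*F*(conj c)*(conj F)^2)*hb1 + (((-1:ℂ)/4) + ((-1:ℂ)/4)*F*(conj F) + ((1:ℂ)/4)*F*(conj b) + ((1:ℂ)/8)*F*(conj a) + ((1:ℂ)/8)*F^2*(conj a)*(conj F) + ((-1:ℂ)/8)*F^2*(conj a)*(conj b) + ((1:ℂ)/4)*b*(conj F) + ((-1:ℂ)/8)*b*F*(conj a)*(conj F) + ((1:ℂ)/8)*a*(conj F) + ((1:ℂ)/8)*a*F*(conj F)^2 + ((-1:ℂ)/8)*a*F*(conj b)*(conj F) + ((-1:ℂ)/8)*a*b*(conj F)^2)*hc1 + (((-1:ℂ)/8)*F*(conj c) + ((1:ℂ)/8)*F*(conj a) + ((-1:ℂ)/8)*c*(conj F) + ((1:ℂ)/8)*c*(conj b) + ((1:ℂ)/8)*b*(conj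 c) + ((-1:ℂ)/8)*b*(conj a) + ((1:ℂ)/8)*a*(conj F) + ((-1:ℂ)/8)*a*(conj b))*hF1
      · apply inner_zero_of'
        simp only [map_sub, map_add, map_mul, map_pow, map_div₀, map_ofNat, Complex.conj_conj]
        linear_combination (((1:ℂ)/8)*F*(conj c) + ((-1:ℂ)/8)*F*(conj b) + ((1:ℂ)/8)*c*(conj F) + ((-1:ℂ)/4)*c*F*(conj c)*(conj F) + ((1:ℂ)/8)*c*F^2*(conj b)*(conj c)*(conj F) + ((-1:ℂ)/8)*b*(conj F) + ((1:ℂ)/4)*b*F*(conj b)*(conj F) + ((-1:ℂ)/8)*b*F^2*(conj b)*(conj c)*(conj F) + ((1:ℂ)/8)*b*c*F*(conj c)*(conj F)^2 + ((-1:ℂ)/8)*b*c*F*(conj b)*(conj F)^2)*ha1 + (((1:ℂ)/4) + ((1:ℂ)/4)*F*(conj F) + ((-1:ℂ)/8)*F*(conj c) + ((-1:ℂ)/4)*F*(conj a) + ((-1:ℂ)/8)*F^2*(conj c)*(conj F) + ((1:ℂ)/8)*F^2*(conj a)*(conj c) + ((-1:ℂ)/8)*c*(conj F) + ((-1:ℂ)/8)*c*F*(conj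 F)^2 + ((1:ℂ)/8)*c*F*(conj a)*(conj F) + ((-1:ℂ)/4)*a*(conj F) + ((1:ℂ)/8)*a*F*(conj c)*(conj F) + ((1:ℂ)/8)*a*c*(conj F)^2)*hb1 + (((-1:ℂ)/4) + ((-1:ℂ)/4)*F*(conj F) + ((1:ℂ)/8)*F*(conj b) + ((1:ℂ)/4)*F*(conj a) + ((1:ℂ)/8)*F^2*(conj b)*(conj F) + ((-1:ℂ)/8)*F^2*(conj a)*(conj b) + ((1:ℂ)/8)*b*(conj F) + ((1:ℂ)/8)*b*F*(conj F)^2 + ((-1:ℂ)/8)*b*F*(conj a)*(conj F) + ((1:ℂ)/4)*a*(conj F) + ((-1:ℂ)/8)*a*F*(conj b)*(conj F) + ((-1:ℂ)/8)*a*b*(conj F)^2)*hc1 + (((-1:ℂ)/8)*F*(conj c) + ((1:ℂ)/8)*F*(conj b) + ((-1:ℂ)/8)*c*(conj F) + ((1:ℂ)/8)*c*(conj a) + ((1:ℂ)/8)*b*(conj F) + ((-1:ℂ)/8)*b*(conj a) + ((1:ℂ)/8)*a*(conj c) + ((-1:ℂ)/8)*a*(conj b))*hF1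
      · apply inner_zero_of'
        simp only [map_sub, map_add, map_mul, map_pow, map_div₀, map_ofNat, Complex.conj_conj]
        linear_combination (((-1:ℂ)/4) + ((1:ℂ)/8)*F*(conj c) + ((1:ℂ)/4)*F*(conj b) + ((-1:ℂ)/8)*F^2*(conj b)*(conj c) + ((1:ℂ)/8)*c*(conj F) + ((-1:ℂ)/8)*c*F*(conj b)*(conj F) + ((1:ℂ)/4)*b*(conj F) + ((-1:ℂ)/8)*b*F*(conj c)*(conj F) + ((-1:ℂ)/4)*b*F*(conj b)*(conj F) + ((1:ℂ)/8)*b*F^2*(conj b)*(conj c)*(conj F) + ((-1:ℂ)/8)*b*c*(conj F)^2 + ((1:ℂ)/8)*b*c*F*(conj b)*(conj F)^2)*ha1 + (((-1:ℂ)/4)*F*(conj F) + ((-1:ℂ)/8)*F*(conj c) + ((1:ℂ)/8)*F*(conj a) + ((1:ℂ)/8)*F^2*(conj c)*(conj F) + ((-1:ℂ)/8)*c*(conj F) + ((1:ℂ)/8)*c*F*(conj F)^2 + ((1:ℂ)/4)*c*F*(conj c)*(conj F) + ((-1:ℂ)/8)*c*F^2*(conj a)*(conj c)*(conj F) + ((1:ℂ)/8)*a*(conj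 F) + ((-1:ℂ)/8)*a*c*F*(conj c)*(conj F)^2)*hb1 + (((1:ℂ)/4) + ((1:ℂ)/4)*F*(conj F) + ((-1:ℂ)/4)*F*(conj b) + ((-1:ℂ)/8)*F*(conj a) + ((-1:ℂ)/8)*F^2*(conj a)*(conj F) + ((1:ℂ)/8)*F^2*(conj a)*(conj b) + ((-1:ℂ)/4)*b*(conj F) + ((1:ℂ)/8)*b*F*(conj a)*(conj F) + ((-1:ℂ)/8)*a*(conj F) + ((-1:ℂ)/8)*a*F*(conj F)^2 + ((1:ℂ)/8)*a*F*(conj b)*(conj F) + ((1:ℂ)/8)*a*b*(conj F)^2)*hc1 + (((1:ℂ)/8)*F*(conj c) + ((-1:ℂ)/8)*F*(conj a) + ((1:ℂ)/8)*c*(conj F) + ((-1:ℂ)/8)*c*(conj b) + ((-1:ℂ)/8)*b*(conj c) + ((1:ℂ)/8)*b*(conj a) + ((-1:ℂ)/8)*a*(conj F) + ((1:ℂ)/8)*a*(conj b))*hF1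
      · apply inner_zero_of'
        simp only [map_sub, map_add, map_mul, map_pow, map_div₀, map_ofNat, Complex.conj_conj]
        ring
      · apply inner_zero_of'
        simp only [map_sub, map_add, map_mul, map_pow, map_div₀, map_ofNat, Complex.conj_conj]
        linear_combination (((-1:ℂ)/4) + ((1:ℂ)/4)*F*(conj c) + ((1:ℂ)/8)*F*(conj b) + ((-1:ℂ)/8)*F^2*(conj b)*(conj c) + ((1:ℂ)/4)*c*(conj F) + ((-1:ℂ)/4)*c*F*(conj c)*(conj F) + ((-1:ℂ)/8)*c*F*(conj b)*(conj F) + ((1:ℂ)/8)*c*F^2*(conj b)*(conj c)*(conj F) + ((1:ℂ)/8)*b*(conj F) + ((-1:ℂ)/8)*b*F*(conj c)*(conj F) + ((-1:ℂ)/8)*b*c*(conj F)^2 + ((1:ℂ)/8)*b*c*F*(conj c)*(conj F)^2)*ha1 + (((1:ℂ)/4) + ((-1:ℂ)/4)*F*(conj c) + ((-1:ℂ)/8)*F*(conj a) + ((1:ℂ)/8)*F^2*(conj a)*(conj c) + ((-1:ℂ)/4)*c*(conj F) + ((1:ℂ)/4)*c*F*(conj c)*(conj F) + ((1:ℂ)/8)*c*F*(conj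 a)*(conj F) + ((-1:ℂ)/8)*c*F^2*(conj a)*(conj c)*(conj F) + ((-1:ℂ)/8)*a*(conj F) + ((1:ℂ)/8)*a*F*(conj c)*(conj F) + ((1:ℂ)/8)*a*c*(conj F)^2 + ((-1:ℂ)/8)*a*c*F*(conj c)*(conj F)^2)*hb1 + (((-1:ℂ)/8)*F*(conj b) + ((1:ℂ)/8)*F*(conj a) + ((1:ℂ)/8)*F^2*(conj b)*(conj F) + ((-1:ℂ)/8)*F^2*(conj a)*(conj F) + ((-1:ℂ)/8)*b*(conj F) + ((1:ℂ)/8)*b*F*(conj F)^2 + ((1:ℂ)/8)*a*(conj F) + ((-1:ℂ)/8)*a*F*(conj F)^2)*hc1 + (((1:ℂ)/8)*F*(conj b) + ((-1:ℂ)/8)*F*(conj a) + ((-1:ℂ)/8)*c*(conj b) + ((1:ℂ)/8)*c*(conj a) + ((1:ℂ)/8)*b*(conj F) + ((-1:ℂ)/8)*b*(conj c) + ((-1:ℂ)/8)*a*(conj F) + ((1:ℂ)/8)*a*(conj c))*hF1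
      · apply inner_zero_of'
        simp only [map_sub, map_add, map_mul, map_pow, map_div₀, map_ofNat, Complex.conj_conj]
        linear_combination (((-1:ℂ)/8)*F*(conj c) + ((1:ℂ)/8)*F*(conj b) + ((-1:ℂ)/8)*c*(conj F) + ((1:ℂ)/4)*c*F*(conj c)*(conj F) + ((-1:ℂ)/8)*c*F^2*(conj b)*(conj c)*(conj F) + ((1:ℂ)/8)*b*(conj F) + ((-1:ℂ)/4)*b*F*(conj b)*(conj F) + ((1:ℂ)/8)*b*F^2*(conj b)*(conj c)*(conj F) + ((-1:ℂ)/8)*b*c*F*(conj c)*(conj F)^2 + ((1:ℂ)/8)*b*c*F*(conj b)*(conj F)^2)*ha1 + (((-1:ℂ)/4) + ((-1:ℂ)/4)*F*(conj F) + ((1:ℂ)/8)*F*(conj c) + ((1:ℂ)/4)*F*(conj a) + ((1:ℂ)/8)*F^2*(conj c)*(conj F) + ((-1:ℂ)/8)*F^2*(conj a)*(conj c) + ((1:ℂ)/8)*c*(conj F) + ((1:ℂ)/8)*c*F*(conj F)^2 + ((-1:ℂ)/8)*c*F*(conj a)*(conj F) + ((1:ℂ)/4)*a*(conj F) + ((-1:ℂ)/8)*a*F*(conj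 c)*(conj F) + ((-1:ℂ)/8)*a*c*(conj F)^2)*hb1 + (((1:ℂ)/4) + ((1:ℂ)/4)*F*(conj F) + ((-1:ℂ)/8)*F*(conj b) + ((-1:ℂ)/4)*F*(conj a) + ((-1:ℂ)/8)*F^2*(conj b)*(conj F) + ((1:ℂ)/8)*F^2*(conj a)*(conj b) + ((-1:ℂ)/8)*b*(conj F) + ((-1:ℂ)/8)*b*F*(conj F)^2 + ((1:ℂ)/8)*b*F*(conj a)*(conj F) + ((-1:ℂ)/4)*a*(conj F) + ((1:ℂ)/8)*a*F*(conj b)*(conj F) + ((1:ℂ)/8)*a*b*(conj F)^2)*hc1 + (((1:ℂ)/8)*F*(conj c) + ((-1:ℂ)/8)*F*(conj b) + ((1:ℂ)/8)*c*(conj F) + ((-1:ℂ)/8)*c*(conj a) + ((-1:ℂ)/8)*b*(conj F) + ((1:ℂ)/8)*b*(conj a) + ((-1:ℂ)/8)*a*(conj c) + ((1:ℂ)/8)*a*(conj b))*hF1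
      · apply inner_zero_of'
        simp only [map_sub, map_add, map_mul, map_pow, map_div₀, map_ofNat, Complex.conj_conj]
        linear_combination (((1:ℂ)/4) + ((-1:ℂ)/4)*F*(conj c) + ((-1:ℂ)/8)*F*(conj b) + ((1:ℂ)/8)*F^2*(conj b)*(conj c) + ((-1:ℂ)/4)*c*(conj F) + ((1:ℂ)/4)*c*F*(conj c)*(conj F) + ((1:ℂ)/8)*c*F*(conj b)*(conj F) + ((-1:ℂ)/8)*c*F^2*(conj b)*(conj c)*(conj F) + ((-1:ℂ)/8)*b*(conj F) + ((1:ℂ)/8)*b*F*(conj c)*(conj F) + ((1:ℂ)/8)*b*c*(conj F)^2 + ((-1:ℂ)/8)*b*c*F*(conj c)*(conj F)^2)*ha1 + (((-1:ℂ)/4) + ((1:ℂ)/4)*F*(conj c) + ((1:ℂ)/8)*F*(conj a) + ((-1:ℂ)/8)*F^2*(conj a)*(conj c) + ((1:ℂ)/4)*c*(conj F) + ((-1:ℂ)/4)*c*F*(conj c)*(conj F) + ((-1:ℂ)/8)*c*F*(conj a)*(conj F) + ((1:ℂ)/8)*c*F^2*(conj a)*(conj c)*(conj F) + ((1:ℂ)/8)*a*(conj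 F) + ((-1:ℂ)/8)*a*F*(conj c)*(conj F) + ((-1:ℂ)/8)*a*c*(conj F)^2 + ((1:ℂ)/8)*a*c*F*(conj c)*(conj F)^2)*hb1 + (((1:ℂ)/8)*F*(conj b) + ((-1:ℂ)/8)*F*(conj a) + ((-1:ℂ)/8)*F^2*(conj b)*(conj F) + ((1:ℂ)/8)*F^2*(conj a)*(conj F) + ((1:ℂ)/8)*b*(conj F) + ((-1:ℂ)/8)*b*F*(conj F)^2 + ((-1:ℂ)/8)*a*(conj F) + ((1:ℂ)/8)*a*F*(conj F)^2)*hc1 + (((-1:ℂ)/8)*F*(conj b) + ((1:ℂ)/8)*F*(conj a) + ((1:ℂ)/8)*c*(conj b) + ((-1:ℂ)/8)*c*(conj a) + ((-1:ℂ)/8)*b*(conj F) + ((1:ℂ)/8)*b*(conj c) + ((1:ℂ)/8)*a*(conj F) + ((-1:ℂ)/8)*a*(conj c))*hF1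
      · apply inner_zero_of'
        simp only [map_sub, map_add, map_mul, map_pow, map_div₀, map_ofNat, Complex.conj_conj]
        ring
  refine ⟨key1, ?_⟩
  rw [key1, key2]
  ring
end

section
/- Fix f1, f2 ∈ ℂ and a complex number F with |F| = 1. For every triangle in the Poncelet family with caustic foci f1, f2 (i.e., pairwise distinct a, b, c with |a| = |b| = |c| = 1, s1 = f1 + f2 + conj(f1·f2)·s3 and s2 = f1·f2 + conj(f1 + f2)·s3), the orthogonal projection V of F onto the Simson line of F satisfies |V - (3F + f1 + f2 - f1·f2·conj(F))/4| = |F - f1|·|F - f2|/4. In other words, over the whole Poncelet family, V moves along one fixed circle, whose center is O_F = (3F + f1 + f2 - f1·f2·conj(F))/4 and whose radius is |F - f1|·|F - f2|/4; this circle passes through F. -/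
set_option maxHeartbeats 1000000

open Complex ComplexConjugate

/-- Over the Poncelet family of triangles inscribed in the unit circle whose inscribed
conic (caustic) has foci `f1`, `f2` (Zaslavsky's relations on `s1, s2, s3`), the vertex
`V` of the inscribed parabola with a fixed focus `F` on the unit circle — i.e. the
orthogonal projection of `F` onto the Simson line of `F` — moves along one fixed
circle of center `O_F = (3F + f1 + f2 - f1·f2·conj F)/4` and radius
`|F - f1|·|F - f2|/4`; this circle passes through `F`. -/
theorem vertex_locus_is_circle (f1 f2 F a b c : ℂ)
    (hab : a ≠ b) (hbc : b ≠ c) (hac : a ≠ c)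
    (ha : ‖a‖ = 1) (hb : ‖b‖ = 1) (hc : ‖c‖ = 1)
    (hF : ‖F‖ = 1)
    (hs1 : a + b + c = f1 + f2 + conj (f1 * f2) * (a * b * c))
    (hs2 : a * b + b * c + c * a = f1 * f2 + conj (f1 + f2) * (a * b * c)) :
    ‖
      ((EuclideanGeometry.orthogonalProjection
          (affineSpan ℝ ({(F + a + b - a * b * conj F) / 2,
                          (F + b + c - b * c * conj F) / 2,
                          (F + c + a - c * a * conj F) / 2} : Set ℂ)) F : ℂ)
        - (3 * F + f1 + f2 - f1 * f2 * conj F) / 4)‖ =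
      ‖F - f1‖ * ‖F - f2‖ / 4 ∧
    ‖F - (3 * F + f1 + f2 - f1 * f2 * conj F) / 4‖ =
      ‖F - f1‖ * ‖F - f2‖ / 4 := by
  have ha0 : a ≠ 0 := by intro h; rw [h] at ha; simp at ha
  have hb0 : b ≠ 0 := by intro h; rw [h] at hb; simp at hb
  have hc0 : c ≠ 0 := by intro h; rw [h] at hc; simp at hc
  have hF0 : F ≠ 0 := by intro h; rw [h] at hF; simp at hF
  have haa : a * conj a = 1 := by
    rw [Complex.mul_conj, Complex.normSq_eq_norm_sq, ha]; norm_num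
  have hbb : b * conj b = 1 := by
    rw [Complex.mul_conj, Complex.normSq_eq_norm_sq, hb]; norm_num
  have hcc : c * conj c = 1 := by
    rw [Complex.mul_conj, Complex.normSq_eq_norm_sq, hc]; norm_num
  have hFF : F * conj F = 1 := by
    rw [Complex.mul_conj, Complex.normSq_eq_norm_sq, hF]; norm_num
  have ha' : conj a = a⁻¹ := eq_inv_of_mul_eq_one_right haa
  have hb' : conj b = b⁻¹ := eq_inv_of_mul_eq_one_right hbb
  have hc' : conj c = c⁻¹ := eq_inv_of_mul_eq_one_right hcc
  have hF' : conj F = F⁻¹ := eq_inv_of_mul_eq_one_right hFF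
  have hs30 : a * b * c ≠ 0 := mul_ne_zero (mul_ne_zero ha0 hb0) hc0
  have hca : c - a ≠ 0 := sub_ne_zero_of_ne (Ne.symm hac)
  set P1 : ℂ := (F + a + b - a * b * conj F) / 2 with hP1
  set P2 : ℂ := (F + b + c - b * c * conj F) / 2 with hP2
  set P3 : ℂ := (F + c + a - c * a * conj F) / 2 with hP3
  set S : Set ℂ := {P1, P2, P3} with hS
  set V : ℂ := (3 * F + (a + b + c) - (a * b + b * c + c * a) * conj F
      + (a * b * c) * (conj F) ^ 2) / 4 with hV
  -- V lies on the Simson line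
  set z : ℂ := (F - a) * (F + c) / (2 * F * (c - a)) with hzdef
  have hD : (2 : ℂ) * F * (c - a) ≠ 0 := mul_ne_zero (mul_ne_zero two_ne_zero hF0) hca
  have hDc : conj ((2 : ℂ) * F * (c - a)) ≠ 0 :=
    fun h => hD (by simpa using congrArg conj h)
  have hz : conj z = z := by
    rw [hzdef, map_div₀, div_eq_div_iff hDc hD]
    simp only [map_mul, map_sub, map_add, ha', hc', hF', map_ofNat]
    field_simp [ha0, hb0, hc0, hF0]
    ring
  have hzre : (z.re : ℂ) = z := Complex.conj_eq_iff_re.mp hz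
  have hline' : z * (P2 - P1) = V - P1 := by
    rw [hzdef, div_mul_eq_mul_div, div_eq_iff hD, hP1, hP2, hV, hF']
    field_simp [ha0, hb0, hc0, hF0]
    ring
  have hline : AffineMap.lineMap P1 P2 (z.re) = V := by
    rw [AffineMap.lineMap_apply]
    simp only [vsub_eq_sub, vadd_eq_add, Complex.real_smul, hzre]
    linear_combination hline'
  have hmemV : V ∈ affineSpan ℝ S := by
    rw [← hline]
    exact AffineMap.lineMap_mem _
      (subset_affineSpan ℝ S (by simp [hS]))
      (subset_affineSpan ℝ S (by simp [hS]))
  -- orthogonality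
  have hg : ∀ x ∈ S, conj x * (a * b * c) - x * F =
      ((a * b * c) * conj F + (a * b + b * c + c * a) - (a + b + c) * F - F ^ 2) / 2 := by
    intro x hx
    simp only [hS, Set.mem_insert_iff, Set.mem_singleton_iff] at hx
    rcases hx with rfl | rfl | rfl
    · rw [hP1]
      simp only [map_div₀, map_mul, map_sub, map_add, Complex.conj_conj, map_ofNat]
      linear_combination ((1/2 : ℂ) * b * c + (-1/2 : ℂ) * b * c * F * (conj b)) * haa +
        ((1/2 : ℂ) * a * c + (-1/2 : ℂ) * c * F) * hbb + ((1/2 : ℂ) * a * b) * hFF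
    · rw [hP2]
      simp only [map_div₀, map_mul, map_sub, map_add, Complex.conj_conj, map_ofNat]
      linear_combination ((1/2 : ℂ) * a * c + (-1/2 : ℂ) * a * c * F * (conj c)) * hbb +
        ((1/2 : ℂ) * a * b + (-1/2 : ℂ) * a * F) * hcc + ((1/2 : ℂ) * b * c) * hFF
    · rw [hP3]
      simp only [map_div₀, map_mul, map_sub, map_add, Complex.conj_conj, map_ofNat]
      linear_combination ((1/2 : ℂ) * b * c + (-1/2 : ℂ) * b * c * F * (conj c)) * haa +
        ((1/2 : ℂ) * a * b + (-1/2 : ℂ) * b * F) * hcc + ((1/2 : ℂ) * a * c) * hFF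
  have hw : (conj V - conj F) * (a * b * c) + (V - F) * F = 0 := by
    rw [hV]
    simp only [map_div₀, map_mul, map_sub, map_add, map_pow, Complex.conj_conj, map_ofNat]
    linear_combination ((1/4 : ℂ) * b * c + (-1/4 : ℂ) * b * c * F * (conj b) +
        (-1/4 : ℂ) * b * c * F * (conj c) + (1/4 : ℂ) * b * c * F^2 * (conj b) * (conj c)) * haa +
      ((1/4 : ℂ) * a * c + (-1/4 : ℂ) * a * c * F * (conj c) + (-1/4 : ℂ) * c * F +
        (1/4 : ℂ) * c * F^2 * (conj c)) * hbb +
      ((1/4 : ℂ) * a * b + (-1/4 : ℂ) * a * F + (-1/4 : ℂ) * b * F + (1/4 : ℂ) * F^2) * hcc +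
      ((-1/4 : ℂ) * a * b + (-1/4 : ℂ) * b * c + (-1/4 : ℂ) * a * c +
        (1/4 : ℂ) * a * b * c * (conj F)) * hFF
  have horth : V - F ∈ (vectorSpan ℝ S)ᗮ := by
    rw [Submodule.mem_orthogonal]
    intro u hu
    rw [vectorSpan_def] at hu
    induction hu using Submodule.span_induction with
    | mem u hu =>
      obtain ⟨x, hx, y, hy, rfl⟩ := hu
      simp only [vsub_eq_sub, Complex.inner]
      have hx' := hg x hx
      have hy' := hg y hy
      have hsum0 : ((conj x - conj y) * (V - F) + (x - y) * (conj V - conj F)) * (a * b * c)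
          = 0 := by
        linear_combination (V - F) * hx' - (V - F) * hy' + (x - y) * hw
      have hsum : (conj x - conj y) * (V - F) + (x - y) * (conj V - conj F) = 0 :=
        (mul_eq_zero.mp hsum0).resolve_right hs30
      have hre : (conj (x - y) * (V - F)).re + (conj (conj (x - y) * (V - F))).re = 0 := by
        have hcc2 : conj (x - y) * (V - F) + conj (conj (x - y) * (V - F)) = 0 := by
          simp only [map_mul, map_sub, Complex.conj_conj]
          linear_combination hsum
        have h2 := congrArg Complex.re hcc2
        simpa using h2
      rw [Complex.conj_re] at hre
      rw [mul_comm (V - F)]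
      linarith
    | zero => simp
    | add u v hu hv h1 h2 => rw [inner_add_left, h1, h2]; norm_num
    | smul r u hu h1 => rw [real_inner_smul_left, h1]; norm_num
  -- the projection equals V
  have hproj : ((EuclideanGeometry.orthogonalProjection (affineSpan ℝ S) F : affineSpan ℝ S) : ℂ)
      = V := by
    have hmem2 : V ∈ AffineSubspace.mk' F (affineSpan ℝ S).directionᗮ := by
      rw [AffineSubspace.mem_mk', vsub_eq_sub, direction_affineSpan]
      exact horth
    have hint := EuclideanGeometry.inter_eq_singleton_orthogonalProjection (s := affineSpan ℝ S) F
    have : V ∈ ({((EuclideanGeometry.orthogonalProjection (affineSpan ℝ S) F :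
        affineSpan ℝ S) : ℂ)} : Set ℂ) := by
      rw [← hint]; exact ⟨hmemV, hmem2⟩
    exact (Set.mem_singleton_iff.mp this).symm
  rw [hproj]
  constructor
  · -- |V - O| = |F-f1||F-f2|/4
    have hVO : V - (3 * F + f1 + f2 - f1 * f2 * conj F) / 4
        = (a * b * c) * conj ((F - f1) * (F - f2)) / 4 := by
      simp only [map_mul, map_sub, map_add] at hs1 hs2 ⊢
      rw [hV]
      linear_combination hs1 / 4 - conj F * hs2 / 4
    rw [hVO]
    simp only [norm_div, norm_mul, map_mul, Complex.norm_conj, ha, hb, hc, Complex.norm_ofNat]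
    ring
  · have hFO : F - (3 * F + f1 + f2 - f1 * f2 * conj F) / 4
        = (F - f1) * (F - f2) * conj F / 4 := by
      linear_combination (f1 + f2 - F) * hFF / 4
    rw [hFO]
    simp only [norm_div, norm_mul, map_mul, Complex.norm_conj, hF, Complex.norm_ofNat]
    ring
end

section
/- Fix f1, f2 ∈ ℂ and set W = f1 + f2 - f1·f2. For every triangle in the Poncelet family with caustic foci f1, f2 (pairwise distinct unit-modulus a, b, c with s1 = f1 + f2 + conj(f1·f2)·s3 and s2 = f1·f2 + conj(f1 + f2)·s3), the directrix of the inscribed parabola with focus F = 1, i.e., the line through the three reflections a + b - ab, b + c - bc, c + a - ca of F in the sidelines, passes through the fixed point W. Moreover W = 2U - 1 where U = (1 + f1 + f2 - f1·f2)/2, i.e., W is the reflection of F about the fixed point U common to all Simson lines of F over the family. -/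
open Complex ComplexConjugate

private lemma mem_span_of_real_ratio (W p q : ℂ) (hpq : q - p ≠ 0)
    (h : conj ((W - p) / (q - p)) = (W - p) / (q - p)) :
    W ∈ affineSpan ℝ ({p, q} : Set ℂ) := by
  set t : ℝ := ((W - p) / (q - p)).re with ht
  have htc : ((t : ℂ)) = (W - p) / (q - p) := Complex.conj_eq_iff_re.mp h
  have hW : W = AffineMap.lineMap p q t := by
    rw [AffineMap.lineMap_apply]
    simp only [vsub_eq_sub, vadd_eq_add, Complex.real_smul, htc]
    field_simp
    ring
  rw [hW]
  exact AffineMap.lineMap_mem_affineSpan_pair t p q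

private lemma ratio_real (m N D : ℂ) (hm : m ≠ 0) (hD : D ≠ 0)
    (hN : conj N = N / m) (hDc : conj D = D / m) :
    conj (N / D) = N / D := by
  rw [map_div₀, hN, hDc]
  field_simp

/-- Over the Poncelet family of triangles inscribed in the unit circle with caustic
foci `f1`, `f2`, the directrix of the inscribed parabola with focus `F = 1` — the line
through the reflections `a+b-ab`, `b+c-bc`, `c+a-ca` of `F` in the sidelines — passes
through the fixed point `W = f1 + f2 - f1·f2`. Moreover `W = 2U - 1` where
`U = (1 + f1 + f2 - f1·f2)/2` is the fixed common point of the Simson lines of `F`. -/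
theorem directrices_through_fixed_point (f1 f2 a b c : ℂ)
    (hab : a ≠ b) (hbc : b ≠ c) (hac : a ≠ c)
    (ha : ‖a‖ = 1) (hb : ‖b‖ = 1) (hc : ‖c‖ = 1)
    (hs1 : a + b + c = f1 + f2 + conj (f1 * f2) * (a * b * c))
    (hs2 : a * b + b * c + c * a = f1 * f2 + conj (f1 + f2) * (a * b * c)) :
    f1 + f2 - f1 * f2 ∈
      affineSpan ℝ ({a + b - a * b, b + c - b * c, c + a - c * a} : Set ℂ) ∧
    f1 + f2 - f1 * f2 = 2 * ((1 + f1 + f2 - f1 * f2) / 2) - 1 := by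
  refine ⟨?_, by ring⟩
  have ha0 : a ≠ 0 := by intro h; simp [h] at ha
  have hb0 : b ≠ 0 := by intro h; simp [h] at hb
  have hc0 : c ≠ 0 := by intro h; simp [h] at hc
  have hm0 : a * b * c ≠ 0 := by simp [ha0, hb0, hc0]
  have hca : conj a = a⁻¹ := (Complex.inv_eq_conj ha).symm
  have hcb : conj b = b⁻¹ := (Complex.inv_eq_conj hb).symm
  have hcc : conj c = c⁻¹ := (Complex.inv_eq_conj hc).symm
  have hWeq : f1 + f2 - f1 * f2
      = a + b + c - conj (f1 * f2) * (a * b * c) - f1 * f2 := by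
    linear_combination -hs1
  by_cases hb1 : b = 1
  · -- use p₁ = a + b - a*b and p₃ = c + a - c*a
    have ha1 : a ≠ 1 := fun h => hab (h.trans hb1.symm)
    have hD0 : (c + a - c * a) - (a + b - a * b) ≠ 0 := by
      have : (c + a - c * a) - (a + b - a * b) = (c - b) * (1 - a) := by ring
      rw [this]
      exact mul_ne_zero (sub_ne_zero.mpr (Ne.symm hbc)) (sub_ne_zero.mpr (Ne.symm ha1))
    have hmem : f1 + f2 - f1 * f2 ∈
        affineSpan ℝ ({a + b - a * b, c + a - c * a} : Set ℂ) := by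
      apply mem_span_of_real_ratio _ _ _ hD0
      apply ratio_real (a * b * c) _ _ hm0 hD0
      · rw [hWeq]
        simp only [map_sub, map_add, map_mul, Complex.conj_conj, hca, hcb, hcc]
        field_simp
        ring
      · simp only [map_sub, map_add, map_mul, hca, hcb, hcc]
        field_simp
        ring
    refine SetLike.le_def.mp (affineSpan_mono ℝ ?_) hmem
    intro x hx
    rcases hx with h | h
    · exact Or.inl h
    · exact Or.inr (Or.inr h)
  · -- use p₁ = a + b - a*b and p₂ = b + c - b*c
    have hD0 : (b + c - b * c) - (a + b - a * b) ≠ 0 := by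
      have : (b + c - b * c) - (a + b - a * b) = (c - a) * (1 - b) := by ring
      rw [this]
      exact mul_ne_zero (sub_ne_zero.mpr (Ne.symm hac)) (sub_ne_zero.mpr (Ne.symm hb1))
    have hmem : f1 + f2 - f1 * f2 ∈
        affineSpan ℝ ({a + b - a * b, b + c - b * c} : Set ℂ) := by
      apply mem_span_of_real_ratio _ _ _ hD0
      apply ratio_real (a * b * c) _ _ hm0 hD0
      · rw [hWeq]
        simp only [map_sub, map_add, map_mul, Complex.conj_conj, hca, hcb, hcc]
        field_simp
        ring
      · simp only [map_sub, map_add, map_mul, hca, hcb, hcc]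
        field_simp
        ring
    refine SetLike.le_def.mp (affineSpan_mono ℝ ?_) hmem
    intro x hx
    rcases hx with h | h
    · exact Or.inl h
    · exact Or.inr (Or.inl h)
end

section
/- Fix f1, f2 ∈ ℂ. For every t with |t| = 1 and every triangle in the Poncelet family with caustic foci f1, f2 (pairwise distinct unit-modulus a, b, c with s1 = f1 + f2 + conj(f1·f2)·s3 and s2 = f1·f2 + conj(f1 + f2)·s3): (i) the Simson line of t (the line through the three feet (t + u + v - uv·conj(t))/2) passes through the point U_t = (t + f1 + f2 - f1·f2·conj(t))/2, and (ii) the line through the three reflections u + v - uv·conj(t) of t in the sidelines (the directrix of the inscribed parabola with focus t) passes through the point W_t = f1 + f2 - f1·f2·conj(t). Moreover |W_t - (f1 + f2)| = |f1·f2|, so as t ranges over the unit circle the points W_t lie on the fixed circle of radius |f1·f2| centered at f1 + f2, a point on the line through the circumcenter 0 and the caustic center (f1 + f2)/2. -/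
open Complex ComplexConjugate

/-- Key algebraic identity: the difference between the directrix point `W` and a
reflection point satisfies the line equation `conj z * (abc) = t * z`. -/
lemma poncelet_key (f1 f2 t a b c : ℂ) (h1 : a * conj a = 1) (h2 : b * conj b = 1)
    (h4 : t * conj t = 1)
    (H1 : a + b + c = f1 + f2 + conj f1 * conj f2 * (a * b * c))
    (H2 : a * b + b * c + c * a = f1 * f2 + (conj f1 + conj f2) * (a * b * c)) :
    conj ((f1 + f2 - f1 * f2 * conj t) - (a + b - a * b * conj t)) * (a * b * c)
      = t * ((f1 + f2 - f1 * f2 * conj t) - (a + b - a * b * conj t)) := by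
  have e : conj ((f1 + f2 - f1 * f2 * conj t) - (a + b - a * b * conj t))
      = conj f1 + conj f2 - conj f1 * conj f2 * t
        - (conj a + conj b - conj a * conj b * t) := by
    simp [map_sub, map_add, map_mul]
  rw [e]
  linear_combination t * H1 - H2 + (-(b*c) + t*c*b*(conj b)) * h1 + (t*c - a*c) * h2
    + (f1*f2 - a*b) * h4

/-- Two nonzero-separated solutions of `conj z * s = t * z` give a real ratio. -/
lemma poncelet_real_ratio {z1 z2 s t : ℂ} (hs : s ≠ 0) (ht : t ≠ 0) (hz : z1 ≠ z2)
    (e1 : conj z1 * s = t * z1) (e2 : conj z2 * s = t * z2) :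
    ∃ μ : ℝ, z1 = (μ : ℂ) * (z1 - z2) := by
  have hd : z1 - z2 ≠ 0 := sub_ne_zero.mpr hz
  have hkey : conj z1 * (z1 - z2) = z1 * (conj z1 - conj z2) := by
    have h0 : s * (conj z1 * z2 - conj z2 * z1) = 0 := by
      linear_combination z2 * e1 - z1 * e2
    have h1 : conj z1 * z2 - conj z2 * z1 = 0 := by
      rcases mul_eq_zero.mp h0 with h | h
      · exact absurd h hs
      · exact h
    linear_combination -h1
  refine ⟨(z1 / (z1 - z2)).re, ?_⟩
  have hw : conj (z1 / (z1 - z2)) = z1 / (z1 - z2) := by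
    rw [map_div₀, map_sub]
    rw [div_eq_div_iff (by simpa using sub_ne_zero.mpr (fun h : conj z1 = conj z2 => hz (by
        simpa using congrArg conj h))) hd]
    linear_combination hkey
  have hre : ((z1 / (z1 - z2)).re : ℂ) = z1 / (z1 - z2) := Complex.conj_eq_iff_re.mp hw
  rw [hre]
  field_simp

/-- Membership of an explicit real affine combination in the span of a pair. -/
lemma poncelet_mem_pair {X P Q : ℂ} (μ : ℝ) (h : X = (μ : ℂ) * (Q - P) + P) :
    X ∈ affineSpan ℝ ({P, Q} : Set ℂ) := by
  have hm := AffineMap.lineMap_mem_affineSpan_pair (k := ℝ) μ P Q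
  have e : (AffineMap.lineMap P Q) μ = X := by
    rw [AffineMap.lineMap_apply]
    simp only [vsub_eq_sub, vadd_eq_add, Complex.real_smul]
    linear_combination -h
  rwa [e] at hm

/-- Over the Poncelet family of triangles inscribed in the unit circle with caustic
foci `f1`, `f2`, for every `t` on the unit circle: (i) the Simson line of `t` passes
through `U_t = (t + f1 + f2 - f1·f2·conj t)/2`; (ii) the directrix of the inscribed
parabola with focus `t` (the line through the reflections of `t` in the sidelines)
passes through `W_t = f1 + f2 - f1·f2·conj t`; and (iii) `|W_t - (f1+f2)| = |f1·f2|`,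
so the points `W_t` lie on the fixed circle of radius `|f1·f2|` centered at
`f1 + f2`. -/
theorem simson_and_directrix_fixed_points (f1 f2 t a b c : ℂ)
    (ht : ‖t‖ = 1)
    (hab : a ≠ b) (hbc : b ≠ c) (hac : a ≠ c)
    (ha : ‖a‖ = 1) (hb : ‖b‖ = 1) (hc : ‖c‖ = 1)
    (hs1 : a + b + c = f1 + f2 + conj (f1 * f2) * (a * b * c))
    (hs2 : a * b + b * c + c * a = f1 * f2 + conj (f1 + f2) * (a * b * c)) :
    (t + f1 + f2 - f1 * f2 * conj t) / 2 ∈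
      affineSpan ℝ ({(t + a + b - a * b * conj t) / 2,
                     (t + b + c - b * c * conj t) / 2,
                     (t + c + a - c * a * conj t) / 2} : Set ℂ) ∧
    f1 + f2 - f1 * f2 * conj t ∈
      affineSpan ℝ ({a + b - a * b * conj t,
                     b + c - b * c * conj t,
                     c + a - c * a * conj t} : Set ℂ) ∧
    ‖(f1 + f2 - f1 * f2 * conj t) - (f1 + f2)‖ = ‖f1 * f2‖ := by
  have unit : ∀ z : ℂ, ‖z‖ = 1 → z * conj z = 1 := by
    intro z hz
    rw [Complex.mul_conj]
    norm_cast
    rw [Complex.normSq_eq_norm_sq, hz]; norm_num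
  have h1 := unit a ha
  have h2 := unit b hb
  have h3 := unit c hc
  have h4 := unit t ht
  have ha0 : a ≠ 0 := fun h => by simp [h] at ha
  have hb0 : b ≠ 0 := fun h => by simp [h] at hb
  have hc0 : c ≠ 0 := fun h => by simp [h] at hc
  have ht0 : t ≠ 0 := fun h => by simp [h] at ht
  have hs30 : a * b * c ≠ 0 := by
    exact mul_ne_zero (mul_ne_zero ha0 hb0) hc0
  rw [map_mul] at hs1
  rw [map_add] at hs2
  -- the three key identities
  set W : ℂ := f1 + f2 - f1 * f2 * conj t with hW
  have eab : conj (W - (a + b - a * b * conj t)) * (a * b * c)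
      = t * (W - (a + b - a * b * conj t)) := poncelet_key f1 f2 t a b c h1 h2 h4 hs1 hs2
  have ebc : conj (W - (b + c - b * c * conj t)) * (a * b * c)
      = t * (W - (b + c - b * c * conj t)) := by
    have := poncelet_key f1 f2 t b c a h2 h3 h4 (by linear_combination hs1)
      (by linear_combination hs2)
    linear_combination this
  have eca : conj (W - (c + a - c * a * conj t)) * (a * b * c)
      = t * (W - (c + a - c * a * conj t)) := by
    have := poncelet_key f1 f2 t c a b h3 h1 h4 (by linear_combination hs1)
      (by linear_combination hs2)
    linear_combination this
  -- a helper: if conj t * x = 1 then x = t (for |t| = 1)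
  have unit_eq : ∀ x : ℂ, 1 - conj t * x = 0 → x = t := by
    intro x hx
    have : t * (1 - conj t * x) = 0 := by rw [hx, mul_zero]
    have : t - x = 0 := by linear_combination this + x * h4
    linear_combination -this
  refine ⟨?_, ?_, ?_⟩
  · -- Simson line
    by_cases hbt : b = t
    · -- use pair (ab, ca)
      have hne : W - (a + b - a * b * conj t) ≠ W - (c + a - c * a * conj t) := by
        intro h
        have h' : (b - c) * (1 - conj t * a) = 0 := by linear_combination -h
        rcases mul_eq_zero.mp h' with h'' | h''
        · exact hbc (by linear_combination h'')
        · exact hab ((unit_eq a h'').symm ▸ hbt.symm ▸ rfl)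
      obtain ⟨μ, hμ⟩ := poncelet_real_ratio hs30 ht0 hne eab eca
      have hmem := poncelet_mem_pair (X := (t + f1 + f2 - f1 * f2 * conj t) / 2)
        (P := (t + a + b - a * b * conj t) / 2) (Q := (t + c + a - c * a * conj t) / 2) μ
        (by rw [hW] at hμ; field_simp; linear_combination hμ)
      refine affineSpan_mono ℝ ?_ hmem
      intro x hx; simp only [Set.mem_insert_iff, Set.mem_singleton_iff] at hx ⊢; tauto
    · -- use pair (ab, bc)
      have hne : W - (a + b - a * b * conj t) ≠ W - (b + c - b * c * conj t) := by
        intro h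
        have h' : (a - c) * (1 - conj t * b) = 0 := by linear_combination -h
        rcases mul_eq_zero.mp h' with h'' | h''
        · exact hac (by linear_combination h'')
        · exact hbt (unit_eq b h'')
      obtain ⟨μ, hμ⟩ := poncelet_real_ratio hs30 ht0 hne eab ebc
      have hmem := poncelet_mem_pair (X := (t + f1 + f2 - f1 * f2 * conj t) / 2)
        (P := (t + a + b - a * b * conj t) / 2) (Q := (t + b + c - b * c * conj t) / 2) μ
        (by rw [hW] at hμ; field_simp; linear_combination hμ)
      refine affineSpan_mono ℝ ?_ hmem
      intro x hx; simp only [Set.mem_insert_iff, Set.mem_singleton_iff] at hx ⊢; tauto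
  · -- directrix
    by_cases hbt : b = t
    · have hne : W - (a + b - a * b * conj t) ≠ W - (c + a - c * a * conj t) := by
        intro h
        have h' : (b - c) * (1 - conj t * a) = 0 := by linear_combination -h
        rcases mul_eq_zero.mp h' with h'' | h''
        · exact hbc (by linear_combination h'')
        · exact hab ((unit_eq a h'').symm ▸ hbt.symm ▸ rfl)
      obtain ⟨μ, hμ⟩ := poncelet_real_ratio hs30 ht0 hne eab eca
      have hmem := poncelet_mem_pair (X := f1 + f2 - f1 * f2 * conj t)
        (P := a + b - a * b * conj t) (Q := c + a - c * a * conj t) μ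
        (by rw [hW] at hμ; linear_combination hμ)
      refine affineSpan_mono ℝ ?_ hmem
      intro x hx; simp only [Set.mem_insert_iff, Set.mem_singleton_iff] at hx ⊢; tauto
    · have hne : W - (a + b - a * b * conj t) ≠ W - (b + c - b * c * conj t) := by
        intro h
        have h' : (a - c) * (1 - conj t * b) = 0 := by linear_combination -h
        rcases mul_eq_zero.mp h' with h'' | h''
        · exact hac (by linear_combination h'')
        · exact hbt (unit_eq b h'')
      obtain ⟨μ, hμ⟩ := poncelet_real_ratio hs30 ht0 hne eab ebc
      have hmem := poncelet_mem_pair (X := f1 + f2 - f1 * f2 * conj t)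
        (P := a + b - a * b * conj t) (Q := b + c - b * c * conj t) μ
        (by rw [hW] at hμ; linear_combination hμ)
      refine affineSpan_mono ℝ ?_ hmem
      intro x hx; simp only [Set.mem_insert_iff, Set.mem_singleton_iff] at hx ⊢; tauto
  · -- circle
    have e : (f1 + f2 - f1 * f2 * conj t) - (f1 + f2) = -(f1 * f2 * conj t) := by ring
    rw [e, norm_neg, norm_mul, Complex.norm_conj, ht, mul_one]
end

section
/- Fix f1, f2 ∈ ℂ and let w ∈ ℂ satisfy w^2 = -f1·f2. For every t with |t| = 1, the point U_t = (t + f1 + f2 - f1·f2·conj(t))/2 (the fixed point through which all Simson lines of t pass, over the Poncelet family with caustic foci f1, f2) satisfies |U_t - ((f1 + f2)/2 + w)| + |U_t - ((f1 + f2)/2 - w)| = 1 + |f1·f2|. That is, as t ranges over the unit circle, U_t traces an ellipse with foci (f1 + f2)/2 ± w and major axis length 1 + |f1·f2|, centered at the center (f1 + f2)/2 of the caustic. -/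
open Complex ComplexConjugate

/-- Let `w² = -f1·f2`. As `t` ranges over the unit circle, the point
`U_t = (t + f1 + f2 - f1·f2·conj t)/2` — the fixed point through which all Simson
lines of `t` pass over the Poncelet family with caustic foci `f1`, `f2` — traces an
ellipse with foci `(f1+f2)/2 ± w` and major axis length `1 + |f1·f2|`, centered at the
center `(f1+f2)/2` of the caustic. -/
theorem simson_fixed_point_traces_ellipse (f1 f2 w t : ℂ)
    (hw : w ^ 2 = -(f1 * f2)) (ht : ‖t‖ = 1) :
    ‖(t + f1 + f2 - f1 * f2 * conj t) / 2 - ((f1 + f2) / 2 + w)‖ +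
      ‖(t + f1 + f2 - f1 * f2 * conj t) / 2 - ((f1 + f2) / 2 - w)‖ =
      1 + ‖f1 * f2‖ := by
  have htt : t * conj t = 1 := by
    have := Complex.mul_conj t
    rw [this]
    norm_cast
    rw [Complex.normSq_eq_norm_sq, ht]; norm_num
  have e1 : (t + f1 + f2 - f1 * f2 * conj t) / 2 - ((f1 + f2) / 2 + w)
      = (t - w) ^ 2 * conj t / 2 := by
    linear_combination (w - t / 2) * htt + (-(conj t) / 2) * hw
  have e2 : (t + f1 + f2 - f1 * f2 * conj t) / 2 - ((f1 + f2) / 2 - w)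
      = (t + w) ^ 2 * conj t / 2 := by
    linear_combination (-w - t / 2) * htt + (-(conj t) / 2) * hw
  have habs : ‖f1 * f2‖ = ‖w‖ ^ 2 := by
    rw [show ‖w‖ ^ 2 = ‖w ^ 2‖ by rw [norm_pow], hw, norm_neg]
  rw [e1, e2, norm_div, norm_div, norm_mul, norm_mul, norm_pow, norm_pow,
    Complex.norm_conj, ht, habs]
  have h1 := Complex.sq_norm (t - w)
  have h2 := Complex.sq_norm (t + w)
  have h3 := Complex.sq_norm t
  have h4 := Complex.sq_norm w
  have hns : Complex.normSq t = 1 := by rw [← h3, ht]; norm_num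
  simp only [Complex.normSq_sub, Complex.normSq_add] at h1 h2
  rw [h1, h2]
  simp only [Complex.norm_ofNat]
  rw [hns, h4]
  ring
end

section
/- Fix f1, f2 ∈ ℂ and let w ∈ ℂ satisfy w^2 = -3·f1·f2/4. For every t with |t| = 1, the point O_t = (3t + f1 + f2 - f1·f2·conj(t))/4 (the center of the fixed circle along which the vertex of the inscribed parabola with focus t moves, over the Poncelet family with caustic foci f1, f2) satisfies |O_t - ((f1 + f2)/4 + w)| + |O_t - ((f1 + f2)/4 - w)| = (3 + |f1·f2|)/2. That is, as t ranges over the unit circle, O_t traces an ellipse centered at (f1 + f2)/4, the midpoint of the circumcenter 0 and the caustic center (f1 + f2)/2, with foci (f1 + f2)/4 ± w and major axis length (3 + |f1·f2|)/2. -/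
open Complex ComplexConjugate

/-- Let `w² = -3·f1·f2/4`. As `t` ranges over the unit circle, the point
`O_t = (3t + f1 + f2 - f1·f2·conj t)/4` — the center of the fixed circle along which
the vertex of the inscribed parabola with focus `t` moves, over the Poncelet family
with caustic foci `f1`, `f2` — traces an ellipse centered at `(f1+f2)/4` (the midpoint
of the circumcenter `0` and the caustic center `(f1+f2)/2`), with foci
`(f1+f2)/4 ± w` and major axis length `(3 + |f1·f2|)/2`. -/
theorem vertex_circle_center_traces_ellipse (f1 f2 w t : ℂ)
    (hw : w ^ 2 = -(3 * (f1 * f2)) / 4) (ht : ‖t‖ = 1) :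
    ‖(3 * t + f1 + f2 - f1 * f2 * conj t) / 4 - ((f1 + f2) / 4 + w)‖ +
      ‖(3 * t + f1 + f2 - f1 * f2 * conj t) / 4 - ((f1 + f2) / 4 - w)‖ =
      (3 + ‖f1 * f2‖) / 2 := by
  have htc : t * conj t = 1 := by
    rw [Complex.mul_conj]
    norm_cast
    rw [Complex.normSq_eq_norm_sq, ht]; norm_num
  have h1 : (3 * t + f1 + f2 - f1 * f2 * conj t) / 4 - ((f1 + f2) / 4 + w)
      = (3 * t - f1 * f2 * conj t) / 4 - w := by ring
  have h2 : (3 * t + f1 + f2 - f1 * f2 * conj t) / 4 - ((f1 + f2) / 4 - w)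
      = (3 * t - f1 * f2 * conj t) / 4 + w := by ring
  rw [h1, h2]
  set u : ℂ := (3 * t - f1 * f2 * conj t) / 4 with hu
  set v : ℂ := (3 * t + f1 * f2 * conj t) / 4 with hv
  set m : ℝ := ‖f1 * f2‖ with hm
  have hm0 : 0 ≤ m := norm_nonneg _
  -- product
  have hfac : (u - w) * (u + w) = v ^ 2 := by
    rw [hu, hv]
    linear_combination (-(3 * (f1 * f2)) / 4) * htc - hw
  have hprod : ‖u - w‖ * ‖u + w‖ = ‖v‖ ^ 2 := by
    rw [← norm_mul, hfac, norm_pow]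
  -- |w|^2
  have hw2 : ‖w‖ ^ 2 = 3 * m / 4 := by
    have h := congrArg norm hw
    rw [norm_pow, norm_div, norm_neg, norm_mul] at h
    rw [h, hm]
    simp
  -- sum of squares
  have hsq : ‖u - w‖ ^ 2 + ‖u + w‖ ^ 2
      = 2 * ‖u‖ ^ 2 + 2 * ‖w‖ ^ 2 := by
    rw [Complex.sq_norm, Complex.sq_norm, Complex.sq_norm, Complex.sq_norm,
      Complex.normSq_sub, Complex.normSq_add]
    ring
  -- |u|^2 + |v|^2
  have huv : ‖u‖ ^ 2 + ‖v‖ ^ 2 = (9 + m ^ 2) / 8 := by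
    rw [Complex.sq_norm, Complex.sq_norm, hu, hv]
    have hnt : Complex.normSq t = 1 := by rw [Complex.normSq_eq_norm_sq, ht]; norm_num
    have hnc : Complex.normSq (conj t) = 1 := by rw [Complex.normSq_conj, hnt]
    have hnm : Complex.normSq (f1 * f2) = m ^ 2 := by
      rw [hm, Complex.normSq_eq_norm_sq]
    have hn3 : Complex.normSq 3 = 9 := by norm_num [Complex.normSq_apply]
    have hn4 : Complex.normSq 4 = 16 := by norm_num [Complex.normSq_apply]
    rw [Complex.normSq_div, Complex.normSq_div, Complex.normSq_sub, Complex.normSq_add]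
    simp only [Complex.normSq_mul, hnt, hnc, hnm, hn3, hn4]
    ring
  set A := ‖u - w‖
  set B := ‖u + w‖
  have hA : 0 ≤ A := norm_nonneg _
  have hB : 0 ≤ B := norm_nonneg _
  have h4 : (A + B) ^ 2 = ((3 + m) / 2) ^ 2 := by
    linear_combination hsq + 2 * hprod + 2 * hw2 + 2 * huv
  have h5 : 0 ≤ A + B := add_nonneg hA hB
  have h6 : 0 ≤ (3 + m) / 2 := by linarith
  calc A + B = Real.sqrt ((A + B) ^ 2) := (Real.sqrt_sq h5).symm
    _ = Real.sqrt (((3 + m) / 2) ^ 2) := by rw [h4]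
    _ = (3 + m) / 2 := Real.sqrt_sq h6
end
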